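/- arXiv:2112.13190 — 6 statements merged into one kernel-verified Lean document; each statement's English description precedes it below -/
import Mathlib

section
/- Let G be a graph with at least one edge and let 0 < η ≤ 1. Then for every partition ℬ of V(G) there exists an η-fat partition 𝒜 of V(G), each of whose parts is a union of parts of ℬ, such that q_𝒜(G) > q_ℬ(G) − 2η. In particular, there exists an η-fat partition 𝒜 of V(G) with q_𝒜(G) > q*(G) − 2η. -/
open Finset
open scoped Classical

/-- The number of edges of a finite graph. -/
noncomputable def edgeCount {V : Type} [Fintype V] [DecidableEq V] (G : SimpleGraph V) : ℕ :=
  G.edgeFinset.card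

/-- vol(A): the sum over vertices of A of their degree in G. -/
noncomputable def degSum {V : Type} [Fintype V] [DecidableEq V] (G : SimpleGraph V)
    (A : Finset V) : ℕ :=
  ∑ v ∈ A, G.degree v

/-- e(A): the number of edges of G with both endpoints in A. -/
noncomputable def intEdges {V : Type} [Fintype V] [DecidableEq V] (G : SimpleGraph V)
    (A : Finset V) : ℕ :=
  (G.edgeFinset.filter (fun e => ∀ v ∈ e, v ∈ A)).card

/-- The modularity score q_𝒜(G) of a vertex partition 𝒜 of G; it is 0 if G has no edges. -/
noncomputable def modScore {V : Type} [Fintype V] [DecidableEq V] (G : SimpleGraph V)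
    (P : Finpartition (univ : Finset V)) : ℝ :=
  if edgeCount G = 0 then 0 else
    (∑ A ∈ P.parts, (intEdges G A : ℝ)) / (edgeCount G : ℝ)
      - (∑ A ∈ P.parts, (degSum G A : ℝ) ^ 2) / (4 * (edgeCount G : ℝ) ^ 2)

/-- The modularity q*(G) of a graph: the maximum of q_𝒜(G) over all vertex partitions 𝒜. -/
noncomputable def modularity {V : Type} [Fintype V] [DecidableEq V] (G : SimpleGraph V) : ℝ :=
  ⨆ P : Finpartition (univ : Finset V), modScore G P

/-- The probability that the random subgraph G_p of G (each edge of G retained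
independently with probability p) satisfies the predicate Q. -/
noncomputable def subgraphProb {V : Type} [Fintype V] [DecidableEq V] (G : SimpleGraph V)
    (p : ℝ) (Q : SimpleGraph V → Prop) : ℝ :=
  ∑ F ∈ G.edgeFinset.powerset,
    if Q (SimpleGraph.fromEdgeSet (F : Set (Sym2 V))) then
      p ^ F.card * (1 - p) ^ (G.edgeFinset.card - F.card)
    else 0

/-!
Let `w_b = vol(b)` for the parts `b` of `ℬ`, so `∑ w_b = 2m`, and put `t = η·2m`. Group the parts
of `ℬ` recursively, splitting a group whenever it can be cut into two subgroups of weight `≥ t`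
each. A group of total weight `S` that cannot be cut has no subfamily of weight in `[t, S - t]`;
deleting its elements of weight `≤ S - 2t` one at a time shows `S (S - 2t) < ∑ w_b²` over the
group, so merging it increases `∑ vol²` by less than `2tS`. Summed over the groups, `∑ vol²`
grows by less than `2t·2m = 8ηm²` while the number of internal edges can only grow, so the
modularity drops by less than `2η`.
-/

namespace Finpartition

variable {α : Type*} [DistribLattice α] [OrderBot α] [DecidableEq α] {a : α}
  {P : Finpartition a} {Q : Finpartition P.parts}

theorem disjoint_sup_of_mem_parts {g h : Finset α} (hg : g ∈ Q.parts) (hh : h ∈ Q.parts)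
    (hgh : g ≠ h) : Disjoint (g.sup id) (h.sup id) := by
  refine Finset.disjoint_sup_left.2 fun p hp => Finset.disjoint_sup_right.2 fun q hq => ?_
  have hpq : p ≠ q := by
    rintro rfl
    exact Finset.disjoint_left.1 (Q.disjoint hg hh hgh) hp hq
  exact P.disjoint (Q.le hg hp) (Q.le hh hq) hpq

theorem sup_ne_bot_of_mem_parts {g : Finset α} (hg : g ∈ Q.parts) : g.sup id ≠ ⊥ := by
  obtain ⟨p, hp⟩ := Q.nonempty_of_mem_parts hg
  exact fun hbot => P.ne_bot (Q.le hg hp) (le_bot_iff.1 (hbot ▸ Finset.le_sup (f := id) hp))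

theorem injOn_sup : Set.InjOn (fun g : Finset α => g.sup id) Q.parts := by
  intro g hg h hh hgh
  by_contra hne
  have hdisj := disjoint_sup_of_mem_parts hg hh hne
  rw [← show g.sup id = h.sup id from hgh] at hdisj
  exact sup_ne_bot_of_mem_parts hg (disjoint_self.1 hdisj)

@[simps]
def coarsen (P : Finpartition a) (Q : Finpartition P.parts) : Finpartition a where
  parts := Q.parts.image (·.sup id)
  supIndep := by
    rw [Finset.supIndep_iff_pairwiseDisjoint, Finset.coe_image]
    rintro _ ⟨g, hg, rfl⟩ _ ⟨h, hh, rfl⟩ hne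
    exact disjoint_sup_of_mem_parts hg hh fun e => hne (e ▸ rfl)
  sup_parts := by
    rw [Finset.sup_image, Function.id_comp, ← Finset.sup_biUnion]
    exact (congrArg (·.sup id) Q.biUnion_parts).trans P.sup_parts
  bot_notMem := by
    rw [Finset.mem_image]
    rintro ⟨g, hg, hbot⟩
    exact sup_ne_bot_of_mem_parts hg hbot

theorem le_coarsen : P ≤ P.coarsen Q := by
  intro b hb
  obtain ⟨g, hg, hbg⟩ := Q.exists_mem hb
  exact ⟨g.sup id, Finset.mem_image_of_mem _ hg, Finset.le_sup (f := id) hbg⟩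

theorem sum_coarsen {M : Type*} [AddCommMonoid M] (f : α → M) :
    ∑ c ∈ (P.coarsen Q).parts, f c = ∑ g ∈ Q.parts, f (g.sup id) :=
  Finset.sum_image injOn_sup

end Finpartition

section Grouping

variable {ι : Type*} [DecidableEq ι] {w : ι → ℝ} {t : ℝ}

theorem mul_sub_lt_sum_sq_of_forall_subset_sum_notMem_Icc {P : Finset ι}
    (hw : ∀ i ∈ P, 0 ≤ w i) (ht : 0 < t) (htP : t ≤ ∑ i ∈ P, w i)
    (hgap : ∀ T ⊆ P, ∑ i ∈ T, w i ∉ Set.Icc t (∑ i ∈ P, w i - t)) :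
    (∑ i ∈ P, w i) * (∑ i ∈ P, w i - 2 * t) < ∑ i ∈ P, w i ^ 2 := by
  induction P using Finset.strongInduction generalizing t with
  | H P ih =>
  by_cases hsmall : ∃ x ∈ P, 0 < w x ∧ w x ≤ ∑ i ∈ P, w i - 2 * t
  · -- Removing a light element `x` moves the window `[t, W - t]` to `[t - w x, W - t]`.
    obtain ⟨x, hxP, hx0, hxW⟩ := hsmall
    have hsum := Finset.sum_erase_add P w hxP
    have hsum_sq := Finset.sum_erase_add P (w · ^ 2) hxP
    have hxt : w x < t := by
      have hx := hgap {x} (Finset.singleton_subset_iff.2 hxP)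
      rw [Finset.sum_singleton, Set.mem_Icc] at hx
      by_contra! hle
      exact hx ⟨hle, by linarith⟩
    have hgap' : ∀ T ⊆ P.erase x,
        ∑ i ∈ T, w i ∉ Set.Icc (t - w x) (∑ i ∈ P.erase x, w i - (t - w x)) := by
      rintro T hT ⟨hlo, hhi⟩
      have hTP : T ⊆ P := hT.trans (Finset.erase_subset x P)
      by_cases hTt : t ≤ ∑ i ∈ T, w i
      · exact hgap T hTP ⟨hTt, by linarith⟩
      · have hxT : x ∉ T := fun h => (Finset.mem_erase.1 (hT h)).1 rfl
        refine hgap (insert x T) (Finset.insert_subset hxP hTP) ?_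
        rw [Finset.sum_insert hxT]
        constructor <;> linarith
    have := ih (P.erase x) (Finset.erase_ssubset hxP)
      (fun i hi => hw i (Finset.mem_of_mem_erase hi)) (by linarith) (by linarith) hgap'
    nlinarith
  · -- Every positive weight exceeds `W - 2t`, so `(W - 2t) w ≤ w²` termwise.
    push Not at hsmall
    obtain ⟨x, hxP, hx0⟩ : ∃ x ∈ P, 0 < w x := by
      by_contra! hall
      linarith [Finset.sum_nonpos hall]
    rw [mul_comm, Finset.mul_sum]
    refine Finset.sum_lt_sum (fun i hi => ?_) ⟨x, hxP, ?_⟩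
    · rcases (hw i hi).eq_or_lt with h | h
      · simp [← h]
      · nlinarith [hsmall i hi h]
    · nlinarith [hsmall x hxP hx0]

theorem exists_finpartition_le_sum_and_sum_sq_lt {P : Finset ι}
    (hw : ∀ i ∈ P, 0 ≤ w i) (ht : 0 < t) (htP : t ≤ ∑ i ∈ P, w i) :
    ∃ Q : Finpartition P, (∀ g ∈ Q.parts, t ≤ ∑ i ∈ g, w i) ∧
      ∑ g ∈ Q.parts, (∑ i ∈ g, w i) ^ 2 < ∑ i ∈ P, w i ^ 2 + 2 * t * ∑ i ∈ P, w i := by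
  induction P using Finset.strongInduction with
  | H P ih =>
  by_cases hsplit : ∃ S ⊆ P, ∑ i ∈ S, w i ∈ Set.Icc t (∑ i ∈ P, w i - t)
  · obtain ⟨S, hSP, hSt, hSP'⟩ := hsplit
    have hsum := Finset.sum_sdiff hSP (f := w)
    have hsum_sq := Finset.sum_sdiff hSP (f := (w · ^ 2))
    have hS : S ⊂ P := by
      refine hSP.ssubset_of_ne fun hSP => ?_
      subst hSP
      linarith
    have hS' : P \ S ⊂ P := by
      refine Finset.sdiff_ssubset hSP (Finset.nonempty_iff_ne_empty.2 ?_)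
      rintro rfl
      rw [Finset.sum_empty] at hSt
      linarith
    obtain ⟨Q₁, hQ₁, hQ₁sq⟩ := ih S hS (fun i hi => hw i (hSP hi)) hSt
    obtain ⟨Q₂, hQ₂, hQ₂sq⟩ := ih (P \ S) hS' (fun i hi => hw i (Finset.sdiff_subset hi))
      (by linarith)
    have hcross : ∀ g ∈ Q₁.parts, ∀ h ∈ Q₂.parts, Disjoint g h := fun g hg h hh =>
      Finset.disjoint_of_subset_left (Q₁.le hg)
        (Finset.disjoint_of_subset_right (Q₂.le hh) Finset.disjoint_sdiff)
    have hdisj : Disjoint Q₁.parts Q₂.parts := Finset.disjoint_left.2 fun g hg₁ hg₂ =>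
      Q₁.ne_bot hg₁ (Finset.disjoint_self_iff_empty g |>.1 (hcross g hg₁ g hg₂))
    have hpw : (↑(Q₁.parts ∪ Q₂.parts) : Set (Finset ι)).PairwiseDisjoint id := by
      rw [Finset.coe_union]
      exact Q₁.disjoint.union Q₂.disjoint fun g hg h hh _ => hcross g hg h hh
    have hsup : (Q₁.parts ∪ Q₂.parts).sup id = P := by
      rw [Finset.sup_union, Q₁.sup_parts, Q₂.sup_parts]
      exact Finset.union_sdiff_of_subset hSP
    refine ⟨(Finpartition.ofPairwiseDisjoint _ hpw).copy hsup, fun g hg => ?_, ?_⟩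
    · rcases Finset.mem_union.1 (Finset.mem_of_mem_erase hg) with hg | hg
      exacts [hQ₁ g hg, hQ₂ g hg]
    · rw [Finpartition.copy_parts,
        Finpartition.sum_ofPairwiseDisjoint_eq_sum hpw (by simp), Finset.sum_union hdisj]
      nlinarith
  · have hP : P ≠ ∅ := by
      rintro rfl
      rw [Finset.sum_empty] at htP
      linarith
    refine ⟨Finpartition.indiscrete hP, by simpa using htP, ?_⟩
    have := mul_sub_lt_sum_sq_of_forall_subset_sum_notMem_Icc hw ht htP
      fun T hT hT' => hsplit ⟨T, hT, hT'⟩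
    rw [Finpartition.indiscrete_parts, Finset.sum_singleton]
    nlinarith

end Grouping

section Modularity

variable {V : Type} [Fintype V] [DecidableEq V] (G : SimpleGraph V)

theorem degSum_sup {g : Finset (Finset V)} (hg : (g : Set (Finset V)).PairwiseDisjoint id) :
    degSum G (g.sup id) = ∑ b ∈ g, degSum G b := by
  rw [Finset.sup_eq_biUnion]
  exact Finset.sum_biUnion hg

theorem sum_degSum_parts (P : Finpartition (univ : Finset V)) :
    ∑ b ∈ P.parts, degSum G b = 2 * edgeCount G := by
  rw [← degSum_sup G P.disjoint, P.sup_parts]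
  exact G.sum_degrees_eq_twice_card_edges

theorem sum_intEdges_le_intEdges_sup {g : Finset (Finset V)}
    (hg : (g : Set (Finset V)).PairwiseDisjoint id) :
    ∑ b ∈ g, intEdges G b ≤ intEdges G (g.sup id) := by
  have hdisj : (g : Set (Finset V)).PairwiseDisjoint
      fun b => G.edgeFinset.filter fun e => ∀ v ∈ e, v ∈ b := by
    intro b hb b' hb' hne
    refine Finset.disjoint_filter.2 fun e _ he he' => ?_
    exact Finset.disjoint_left.1 (hg hb hb' hne) (he _ e.out_fst_mem) (he' _ e.out_fst_mem)
  simp only [intEdges]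
  rw [← Finset.card_biUnion hdisj]
  refine Finset.card_le_card fun e he => ?_
  obtain ⟨b, hb, he⟩ := Finset.mem_biUnion.1 he
  rw [Finset.mem_filter] at he ⊢
  exact ⟨he.1, fun v hv => Finset.le_sup (f := id) hb (he.2 v hv)⟩

theorem sum_intEdges_le_sum_intEdges_coarsen {s : Finset V} (B : Finpartition s)
    (Q : Finpartition B.parts) :
    ∑ b ∈ B.parts, intEdges G b ≤ ∑ a ∈ (B.coarsen Q).parts, intEdges G a := by
  rw [B.sum_coarsen]
  conv_lhs => rw [← Q.biUnion_parts]
  rw [Finset.sum_biUnion Q.disjoint]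
  exact Finset.sum_le_sum fun g hg =>
    sum_intEdges_le_intEdges_sup G (B.disjoint.subset (Finset.coe_subset.2 (Q.le hg)))

theorem modScore_sub_lt_modScore {A B : Finpartition (univ : Finset V)} {δ : ℝ}
    (hG : 0 < edgeCount G)
    (hint : ∑ b ∈ B.parts, intEdges G b ≤ ∑ a ∈ A.parts, intEdges G a)
    (hvol : ∑ a ∈ A.parts, (degSum G a : ℝ) ^ 2
      < ∑ b ∈ B.parts, (degSum G b : ℝ) ^ 2 + 4 * (edgeCount G : ℝ) ^ 2 * δ) :
    modScore G B - δ < modScore G A := by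
  have hm : (0 : ℝ) < edgeCount G := by exact_mod_cast hG
  have hint' : ∑ b ∈ B.parts, (intEdges G b : ℝ) ≤ ∑ a ∈ A.parts, (intEdges G a : ℝ) := by
    exact_mod_cast hint
  simp only [modScore, if_neg hG.ne']
  have hdiv : (∑ a ∈ A.parts, (degSum G a : ℝ) ^ 2) / (4 * (edgeCount G : ℝ) ^ 2)
      < (∑ b ∈ B.parts, (degSum G b : ℝ) ^ 2) / (4 * (edgeCount G : ℝ) ^ 2) + δ := by
    rw [div_add' _ _ _ (by positivity)]
    exact div_lt_div_of_pos_right (by linarith) (by positivity)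
  have := div_le_div_of_nonneg_right hint' hm.le
  linarith

theorem exists_coarsening_fat_modScore_gt (hG : 0 < edgeCount G) {η : ℝ} (hη0 : 0 < η)
    (hη1 : η ≤ 1) (B : Finpartition (univ : Finset V)) :
    ∃ A : Finpartition (univ : Finset V), B ≤ A ∧
      (∀ s ∈ A.parts, η * (2 * (edgeCount G : ℝ)) ≤ (degSum G s : ℝ)) ∧
      modScore G B - 2 * η < modScore G A := by
  have hm : (0 : ℝ) < edgeCount G := by exact_mod_cast hG
  have hvol : ∑ b ∈ B.parts, (degSum G b : ℝ) = 2 * edgeCount G := by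
    exact_mod_cast sum_degSum_parts G B
  obtain ⟨Q, hfat, hsq⟩ := exists_finpartition_le_sum_and_sum_sq_lt
    (w := fun b => (degSum G b : ℝ)) (t := η * (2 * edgeCount G)) (fun _ _ => by positivity)
    (by positivity) (by rw [hvol]; nlinarith)
  have hvol_sup : ∀ g ∈ Q.parts, (degSum G (g.sup id) : ℝ) = ∑ b ∈ g, (degSum G b : ℝ) :=
    fun g hg => by exact_mod_cast degSum_sup G (B.disjoint.subset (Finset.coe_subset.2 (Q.le hg)))
  refine ⟨B.coarsen Q, B.le_coarsen, ?_, ?_⟩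
  · intro s hs
    obtain ⟨g, hg, rfl⟩ := Finset.mem_image.1 hs
    rw [hvol_sup g hg]
    exact hfat g hg
  · refine modScore_sub_lt_modScore G hG (sum_intEdges_le_sum_intEdges_coarsen G B Q) ?_
    rw [B.sum_coarsen, Finset.sum_congr rfl fun g hg => by rw [hvol_sup g hg]]
    rw [hvol] at hsq
    linarith

end Modularity

/-- The fattening lemma: for a graph G with at least one edge and 0 < η ≤ 1,
every partition ℬ of V(G) can be coarsened (each part of the new partition is a
union of parts of ℬ, i.e. ℬ refines it) into an η-fat partition 𝒜 (each part has
volume at least η·vol(G), where vol(G) = 2·e(G)) with q_𝒜(G) > q_ℬ(G) − 2η.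
In particular there is an η-fat partition 𝒜 with q_𝒜(G) > q*(G) − 2η. -/
theorem statement5 (V : Type) [Fintype V] [DecidableEq V] (G : SimpleGraph V)
    (hG : 0 < edgeCount G) (η : ℝ) (hη0 : 0 < η) (hη1 : η ≤ 1) :
    (∀ B : Finpartition (univ : Finset V),
      ∃ A : Finpartition (univ : Finset V), B ≤ A ∧
        (∀ s ∈ A.parts, η * (2 * (edgeCount G : ℝ)) ≤ (degSum G s : ℝ)) ∧
        modScore G B - 2 * η < modScore G A) ∧
    (∃ A : Finpartition (univ : Finset V),
      (∀ s ∈ A.parts, η * (2 * (edgeCount G : ℝ)) ≤ (degSum G s : ℝ)) ∧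
      modularity G - 2 * η < modScore G A) := by
  refine ⟨exists_coarsening_fat_modScore_gt G hG hη0 hη1, ?_⟩
  obtain ⟨P, hP⟩ := Finite.exists_max (modScore G)
  obtain ⟨A, -, hfat, hA⟩ := exists_coarsening_fat_modScore_gt G hG hη0 hη1 P
  exact ⟨A, hfat, lt_of_le_of_lt (sub_le_sub_right (ciSup_le hP) _) hA⟩
end

section
/- Let n ≥ 1 and let x₁, …, x_n be positive reals with Σᵢ xᵢ = 1. Then there exists a subset A ⊆ {1, …, n} such that min( Σ_{i∈A} xᵢ , 1 − Σ_{i∈A} xᵢ ) ≥ (1/2)·(1 − Σᵢ xᵢ²). In particular, the number-partitioning value λ(x) = max_{A⊆[n]} min( Σ_{i∈A} xᵢ , 1 − Σ_{i∈A} xᵢ ) satisfies λ(x) ≥ (1/2)·(1 − Σᵢ xᵢ²). -/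
open Finset

lemma key_partition {n : ℕ} (x : Fin n → ℝ) (hx : ∀ i, 0 ≤ x i)
    (s : Finset (Fin n)) :
    ∃ A ⊆ s, |(∑ i ∈ A, x i) - (∑ i ∈ s, x i - ∑ i ∈ A, x i)| * (∑ i ∈ s, x i)
      ≤ ∑ i ∈ s, (x i) ^ 2 := by
  induction s using Finset.strongInduction with
  | _ s ih =>
    rcases s.eq_empty_or_nonempty with rfl | hs
    · exact ⟨∅, by simp⟩
    · obtain ⟨m, hm, hmin⟩ := s.exists_min_image x hs
      obtain ⟨A', hA', hle⟩ := ih (s.erase m) (Finset.erase_ssubset hm)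
      set SA := ∑ i ∈ A', x i with hSA
      set t' := ∑ i ∈ s.erase m, x i with ht'
      set q' := ∑ i ∈ s.erase m, (x i) ^ 2 with hq'
      have hts : ∑ i ∈ s, x i = x m + t' := (Finset.add_sum_erase s x hm).symm
      have hqs : ∑ i ∈ s, (x i) ^ 2 = (x m) ^ 2 + q' :=
        (Finset.add_sum_erase s (fun i => (x i) ^ 2) hm).symm
      have hSAnn : 0 ≤ SA := Finset.sum_nonneg fun i _ => hx i
      have hSAle : SA ≤ t' :=
        Finset.sum_le_sum_of_subset_of_nonneg hA' (fun i _ _ => hx i)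
      have hct' : x m * t' ≤ q' := by
        rw [ht', hq', Finset.mul_sum]
        refine Finset.sum_le_sum fun i hi => ?_
        have := hmin i (Finset.mem_of_mem_erase hi)
        nlinarith [hx i, hx m]
      have hcnn : 0 ≤ x m := hx m
      have ht'nn : 0 ≤ t' := Finset.sum_nonneg fun i _ => hx i
      have hmA' : m ∉ A' := fun h => (Finset.ne_of_mem_erase (hA' h)) rfl
      rcases le_total (t' - SA) SA with hcase | hcase
      · -- A' is the heavier side; put m on the other side, i.e. keep A = A'
        refine ⟨A', hA'.trans (Finset.erase_subset m s), ?_⟩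
        rw [hts, hqs]
        have habs : |SA - (t' - SA)| = SA - (t' - SA) := abs_of_nonneg (by linarith)
        rw [habs] at hle
        rcases abs_cases (SA - (x m + t' - SA)) with ⟨h1, h2⟩ | ⟨h1, h2⟩ <;>
          nlinarith
      · -- A' is the lighter side; add m to it
        refine ⟨insert m A', ?_, ?_⟩
        · intro i hi
          rcases Finset.mem_insert.mp hi with rfl | hi
          · exact hm
          · exact Finset.mem_of_mem_erase (hA' hi)
        · rw [Finset.sum_insert hmA', hts, hqs]
          have habs : |SA - (t' - SA)| = -(SA - (t' - SA)) := abs_of_nonpos (by linarith)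
          rw [habs] at hle
          rcases abs_cases (x m + SA - (x m + t' - (x m + SA))) with ⟨h1, h2⟩ | ⟨h1, h2⟩ <;>
            nlinarith

/-- The greedy bi-partitioning bound: if x₁, …, x_n are positive reals summing to 1
(n ≥ 1), then some subset A of the indices satisfies
min(Σ_{i∈A} xᵢ, 1 − Σ_{i∈A} xᵢ) ≥ (1/2)(1 − Σᵢ xᵢ²); in particular the
number-partitioning value λ(x) = max_A min(Σ_A x, 1 − Σ_A x) is at least
(1/2)(1 − Σᵢ xᵢ²). -/
theorem statement7 (n : ℕ) (hn : 1 ≤ n) (x : Fin n → ℝ) (hx : ∀ i, 0 < x i)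
    (hsum : ∑ i, x i = 1) :
    (∃ A : Finset (Fin n),
      (1 / 2) * (1 - ∑ i, (x i) ^ 2) ≤ min (∑ i ∈ A, x i) (1 - ∑ i ∈ A, x i)) ∧
    (1 / 2) * (1 - ∑ i, (x i) ^ 2) ≤
      ⨆ A : Finset (Fin n), min (∑ i ∈ A, x i) (1 - ∑ i ∈ A, x i) := by
  obtain ⟨A, -, hle⟩ := key_partition x (fun i => (hx i).le) Finset.univ
  rw [hsum, mul_one] at hle
  have habs := abs_le.mp hle
  have hmain : (1 / 2) * (1 - ∑ i, (x i) ^ 2) ≤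
      min (∑ i ∈ A, x i) (1 - ∑ i ∈ A, x i) := by
    refine le_min (by linarith [habs.1, habs.2]) (by linarith [habs.1, habs.2])
  refine ⟨⟨A, hmain⟩, hmain.trans ?_⟩
  exact le_ciSup (f := fun A : Finset (Fin n) => min (∑ i ∈ A, x i) (1 - ∑ i ∈ A, x i))
    (Set.Finite.bddAbove (Set.finite_range _)) A
end

section
/- Let n ≥ 1, let x₁, …, x_n be positive reals with Σᵢ xᵢ = 1, and let 0 < η ≤ 1. Then there exists a partition 𝒜 = (A₁, …, A_k) of {1, …, n} such that, writing S_j = Σ_{i∈A_j} xᵢ, every part satisfies S_j ≥ η, and the cost c(𝒜, x) = Σ_{j=1}^{k} S_j² − Σ_{i=1}^{n} xᵢ² satisfies c(𝒜, x) < 2η. -/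
/-!
Call a set *splittable* if it is the disjoint union of two sets of weight at least `η`. A fat
subset `T` of `F` of least weight is unsplittable, and if `F \ T` is light then so is every
complement of a fat subset of `F`, i.e. `F` is unsplittable. So peeling off such `T` recursively
yields a fat partition into unsplittable parts, and it suffices that an unsplittable set of weight
`s` has cost `s² - ∑ xᵢ² < 2ηs`. This is clear if `s ≤ 2η`. Otherwise, with `t = s - 2η > 0`, no
subset sum lies in `[η, η + t)`, so light sets stay light when an element of size at most `t` is
added. If `δ` is the weight of these small elements, this forces some element to exceed `t + δ`,
and then `∑ xᵢ (xᵢ - t) > 0`, i.e. `∑ xᵢ² > ts`.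
-/

open Finset

section FatPartition

variable {ι : Type*} {x : ι → ℝ} {η t : ℝ} {A : Finset ι}

theorem mul_sum_lt_sum_sq_of_gt_add_sum_filter_le (hx : ∀ i ∈ A, 0 ≤ x i) (ht : 0 ≤ t)
    {b : ι} (hb : b ∈ A) (hxb : t + ∑ i ∈ A with x i ≤ t, x i < x b) :
    t * ∑ i ∈ A, x i < ∑ i ∈ A, x i ^ 2 := by
  set δ := ∑ i ∈ A with x i ≤ t, x i
  have hδ : 0 ≤ δ := sum_nonneg fun i hi => hx i (mem_filter.mp hi).1
  set g : ι → ℝ := fun i => if x i ≤ t then x i else 0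
  have hg : ∑ i ∈ A, t * g i = t * δ := by rw [← mul_sum, (sum_filter _ _).symm]
  -- the terms `x i * (x i - t)` are negative only on small elements, and there `≥ -t * x i`
  have hgle : ∀ i ∈ A, 0 ≤ x i * (x i - t) + t * g i := by
    intro i hi
    simp only [g]
    split_ifs with hit
    · nlinarith [sq_nonneg (x i)]
    · nlinarith [hx i hi]
  have hgb : g b = 0 := if_neg (by linarith)
  have hbig : t * δ < x b * (x b - t) := by nlinarith
  have := single_le_sum hgle hb
  rw [sum_add_distrib, hg, hgb] at this
  have hsum : ∑ i ∈ A, x i * (x i - t) = ∑ i ∈ A, x i ^ 2 - t * ∑ i ∈ A, x i := by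
    simp only [mul_sub, sum_sub_distrib, mul_sum, sq, mul_comm]
  linarith

variable [DecidableEq ι]

theorem sum_union_lt_of_forall_le_of_window
    (hwin : ∀ S ⊆ A, ∑ i ∈ S, x i < η + t → ∑ i ∈ S, x i < η)
    {G E : Finset ι} (hG : G ⊆ A) (hE : E ⊆ A) (hGη : ∑ i ∈ G, x i < η)
    (hEt : ∀ e ∈ E, x e ≤ t) : ∑ i ∈ G ∪ E, x i < η := by
  induction E using Finset.induction_on with
  | empty => simpa using hGη
  | insert e E _ ih =>
    have hGE : ∑ i ∈ G ∪ E, x i < η :=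
      ih ((subset_insert e E).trans hE) fun i hi => hEt i (mem_insert_of_mem hi)
    rw [union_insert]
    by_cases he : e ∈ G ∪ E
    · rwa [insert_eq_of_mem he]
    · refine hwin _ (insert_subset (hE (mem_insert_self e E))
        (union_subset hG ((subset_insert e E).trans hE))) ?_
      rw [sum_insert he]
      linarith [hEt e (mem_insert_self e E)]

theorem exists_gt_add_sum_filter_le_of_window
    (hwin : ∀ S ⊆ A, ∑ i ∈ S, x i < η + t → ∑ i ∈ S, x i < η)
    (hη : 0 < η) (hA : η ≤ ∑ i ∈ A, x i) :
    ∃ b ∈ A, t + ∑ i ∈ A with x i ≤ t, x i < x b := by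
  set D := A.filter (fun i => x i ≤ t)
  have hDA : D ⊆ A := filter_subset _ _
  have hDt : ∀ d ∈ D, x d ≤ t := fun d hd => (mem_filter.mp hd).2
  by_contra! hsmall
  suffices h : ∀ G ⊆ A, ∑ i ∈ G ∪ D, x i < η by
    have := h A subset_rfl
    rw [union_eq_left.mpr hDA] at this
    linarith
  intro G
  induction G using Finset.induction_on with
  | empty =>
    intro _
    simpa using sum_union_lt_of_forall_le_of_window hwin (empty_subset A) hDA (by simpa) hDt
  | insert b G hbG ih =>
    intro hbGA
    have hGD : ∑ i ∈ G ∪ D, x i < η := ih ((subset_insert b G).trans hbGA)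
    by_cases hbD : b ∈ D
    · rwa [insert_union, insert_eq_of_mem (mem_union_right G hbD)]
    have hsplitGD : ∑ i ∈ G ∪ D, x i = ∑ i ∈ G \ D, x i + ∑ i ∈ D, x i := by
      rw [← sdiff_union_self_eq_union, sum_union sdiff_disjoint]
    have hS : insert b G \ D = insert b (G \ D) := insert_sdiff_of_notMem G hbD
    have hSA : insert b G \ D ⊆ A := sdiff_subset.trans hbGA
    have hSη : ∑ i ∈ insert b G \ D, x i < η := by
      refine hwin _ hSA ?_
      rw [hS, sum_insert fun h => hbG (mem_sdiff.mp h).1]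
      linarith [hsmall b (hbGA (mem_insert_self b G))]
    simpa [sdiff_union_self_eq_union] using
      sum_union_lt_of_forall_le_of_window hwin hSA hDA hSη hDt

theorem sq_sum_sub_sum_sq_lt_of_not_splittable (hx : ∀ i ∈ A, 0 < x i) (hA : A.Nonempty)
    (hsplit : ∀ G ⊆ A, η ≤ ∑ i ∈ G, x i → ∑ i ∈ A \ G, x i < η) :
    (∑ i ∈ A, x i) ^ 2 - ∑ i ∈ A, x i ^ 2 < 2 * η * ∑ i ∈ A, x i := by
  set s := ∑ i ∈ A, x i
  have hs : 0 < s := sum_pos hx hA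
  have hsq : 0 < ∑ i ∈ A, x i ^ 2 := sum_pos (fun i hi => pow_pos (hx i hi) 2) hA
  have hη : 0 < η := by
    by_contra! hη
    have := hsplit ∅ (empty_subset A) (by simpa using hη)
    rw [sdiff_empty] at this
    linarith
  rcases le_or_gt s (2 * η) with hs2 | hs2
  · nlinarith
  have hwin : ∀ S ⊆ A, ∑ i ∈ S, x i < η + (s - 2 * η) → ∑ i ∈ S, x i < η := by
    intro S hSA hS
    by_contra! hηS
    have := hsplit S hSA hηS
    rw [sum_sdiff_eq_sub hSA] at this
    linarith
  obtain ⟨b, hb, hxb⟩ := exists_gt_add_sum_filter_le_of_window hwin hη (by linarith)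
  have := mul_sum_lt_sum_sq_of_gt_add_sum_filter_le (fun i hi => (hx i hi).le)
    (by linarith) hb hxb
  nlinarith

theorem exists_fat_finpartition (hx : ∀ i, 0 < x i) (hη : 0 < η) (F : Finset ι)
    (hF : η ≤ ∑ i ∈ F, x i) :
    ∃ P : Finpartition F, (∀ A ∈ P.parts, η ≤ ∑ i ∈ A, x i) ∧
      ∑ A ∈ P.parts, (∑ i ∈ A, x i) ^ 2 - ∑ i ∈ F, x i ^ 2 < 2 * η * ∑ i ∈ F, x i := by
  induction F using Finset.strongInduction with
  | H F ih =>
  obtain ⟨T, hT, hTmin⟩ := exists_min_image (F.powerset.filter fun T => η ≤ ∑ i ∈ T, x i)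
    (fun T => ∑ i ∈ T, x i) ⟨F, mem_filter.mpr ⟨mem_powerset_self F, hF⟩⟩
  simp only [mem_filter, mem_powerset, and_imp] at hT hTmin
  obtain ⟨hTF, hTη⟩ := hT
  have hTne : T.Nonempty := nonempty_of_sum_ne_zero (hη.trans_le hTη).ne'
  by_cases hrest : η ≤ ∑ i ∈ F \ T, x i
  · obtain ⟨P, hPfat, hPcost⟩ := ih (F \ T) (sdiff_ssubset hTF hTne) hrest
    have hTcost := sq_sum_sub_sum_sq_lt_of_not_splittable (fun i _ => hx i) hTne
      fun G hGT hGη => by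
        have := hTmin G (hGT.trans hTF) hGη
        rw [sum_sdiff_eq_sub hGT]
        linarith
    have hT_notMem : T ∉ P.parts := fun h => hTne.ne_empty <|
      (disjoint_sdiff_self_left.mono_left (P.le h)).eq_bot_of_le subset_rfl
    refine ⟨P.extend hTne.ne_empty sdiff_disjoint (sdiff_union_of_subset hTF), ?_, ?_⟩
    · simp only [Finpartition.extend_parts, forall_mem_insert]
      exact ⟨hTη, hPfat⟩
    · rw [Finpartition.extend_parts, sum_insert hT_notMem, ← sum_sdiff hTF (f := fun i => x i),
        ← sum_sdiff hTF (f := fun i => x i ^ 2)]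
      linarith
  · have hFne : F.Nonempty := hTne.mono hTF
    refine ⟨Finpartition.indiscrete hFne.ne_empty, by simpa using hF, ?_⟩
    rw [Finpartition.indiscrete_parts, sum_singleton]
    refine sq_sum_sub_sum_sq_lt_of_not_splittable (fun i _ => hx i) hFne fun G hGF hGη => ?_
    have := hTmin G hGF hGη
    rw [sum_sdiff_eq_sub hTF] at hrest
    rw [sum_sdiff_eq_sub hGF]
    linarith

end FatPartition

theorem statement8_general (n : ℕ) (x : Fin n → ℝ) (hx : ∀ i, 0 < x i)
    (hsum : ∑ i, x i = 1) (η : ℝ) (hη0 : 0 < η) (hη1 : η ≤ 1) :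
    ∃ P : Finpartition (univ : Finset (Fin n)),
      (∀ A ∈ P.parts, η ≤ ∑ i ∈ A, x i) ∧
      (∑ A ∈ P.parts, (∑ i ∈ A, x i) ^ 2) - ∑ i, (x i) ^ 2 < 2 * η := by
  obtain ⟨P, hfat, hcost⟩ := exists_fat_finpartition hx hη0 univ (hsum ▸ hη1)
  exact ⟨P, hfat, by simpa [hsum] using hcost⟩

/-- The number greedy partitioning lemma: if x₁, …, x_n are positive reals summing
to 1 (n ≥ 1) and 0 < η ≤ 1, then there is a partition 𝒜 of {1, …, n} which is
(x, η)-fat (each part A satisfies Σ_{i∈A} xᵢ ≥ η) and whose cost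
c(𝒜, x) = Σ_{A∈𝒜} (Σ_{i∈A} xᵢ)² − Σᵢ xᵢ² is less than 2η. -/
theorem statement8 (n : ℕ) (hn : 1 ≤ n) (x : Fin n → ℝ) (hx : ∀ i, 0 < x i)
    (hsum : ∑ i, x i = 1) (η : ℝ) (hη0 : 0 < η) (hη1 : η ≤ 1) :
    ∃ P : Finpartition (univ : Finset (Fin n)),
      (∀ A ∈ P.parts, η ≤ ∑ i ∈ A, x i) ∧
      (∑ A ∈ P.parts, (∑ i ∈ A, x i) ^ 2) - ∑ i, (x i) ^ 2 < 2 * η :=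
  statement8_general n x hx hsum η hη0 hη1
end

section
/- For every b > 0 and ε > 0 there exists a constant c = c(b, ε) > 0 such that the following holds: for every probability p with 0 < p ≤ 1 and every b-bounded weight function w on a finite vertex set V with vol_w(V)·p ≥ c, the random weight function w_p satisfies q*(w_p) > q*(w) − ε with probability at least 1 − ε. -/
open Finset
open scoped Classical

/-- The weighted degree deg_w(u) = Σ_v w(u,v). -/
noncomputable def wDeg {V : Type} [Fintype V] (w : V → V → ℝ) (u : V) : ℝ :=
  ∑ v, w u v

/-- The weighted volume vol_w(X) = Σ_{u∈X} deg_w(u). -/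
noncomputable def wVol {V : Type} [Fintype V] (w : V → V → ℝ) (X : Finset V) : ℝ :=
  ∑ u ∈ X, wDeg w u

/-- The weighted edge count e_w(A) = (1/2)·Σ_{u,v∈A} w(u,v). -/
noncomputable def wEdge {V : Type} [Fintype V] (w : V → V → ℝ) (A : Finset V) : ℝ :=
  (1 / 2) * ∑ u ∈ A, ∑ v ∈ A, w u v

/-- The weighted modularity score q_𝒜(w) of a partition 𝒜 of V; it is 0 if
vol_w(V) = 0 (for nonnegative w this means w is identically zero). -/
noncomputable def wModScore {V : Type} [Fintype V] [DecidableEq V] (w : V → V → ℝ)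
    (P : Finpartition (univ : Finset V)) : ℝ :=
  if wVol w univ = 0 then 0 else
    (∑ A ∈ P.parts, 2 * wEdge w A) / wVol w univ
      - (∑ A ∈ P.parts, (wVol w A) ^ 2) / (wVol w univ) ^ 2

/-- The weighted modularity q*(w) = max_𝒜 q_𝒜(w). -/
noncomputable def wModularity {V : Type} [Fintype V] [DecidableEq V] (w : V → V → ℝ) : ℝ :=
  ⨆ P : Finpartition (univ : Finset V), wModScore w P

/-- The probability that the random weight function w_p (each unordered pair of
vertices independently keeps its w-value with probability p and is set to 0
otherwise) satisfies the predicate Q. -/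
noncomputable def wProb {V : Type} [Fintype V] [DecidableEq V] (w : V → V → ℝ) (p : ℝ)
    (Q : (V → V → ℝ) → Prop) : ℝ :=
  ∑ S ∈ (univ : Finset (Sym2 V)).powerset,
    if Q (fun u v => if s(u, v) ∈ S then w u v else 0) then
      p ^ S.card * (1 - p) ^ (Fintype.card (Sym2 V) - S.card)
    else 0

set_option maxHeartbeats 1000000
section MSproof
namespace MS
open Finset
variable {V : Type} [Fintype V] [DecidableEq V]

/-- product measure weight -/
noncomputable def mu (p : ℝ) (S : Finset (Sym2 V)) : ℝ :=
  p ^ S.card * (1 - p) ^ (Fintype.card (Sym2 V) - S.card)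

noncomputable def ind (e : Sym2 V) (S : Finset (Sym2 V)) : ℝ := if e ∈ S then 1 else 0

noncomputable def Y (a : V → V → ℝ) (S : Finset (Sym2 V)) : ℝ :=
  ∑ u, ∑ v, a u v * ind s(u, v) S

def SameP (P : Finpartition (univ : Finset V)) (u v : V) : Prop :=
  ∃ A ∈ P.parts, u ∈ A ∧ v ∈ A

lemma master (F G : Sym2 V → ℝ) :
    ∑ S ∈ (univ : Finset (Sym2 V)).powerset, ∏ i : Sym2 V, (if i ∈ S then F i else G i)
      = ∏ i : Sym2 V, (F i + G i) := by
  rw [Finset.prod_add]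
  refine Finset.sum_congr rfl fun S hS => ?_
  rw [mem_powerset] at hS
  have hu : (univ : Finset (Sym2 V)) = S ∪ (univ \ S) := (Finset.union_sdiff_of_subset hS).symm
  conv_lhs => rw [hu]
  rw [Finset.prod_union Finset.disjoint_sdiff]
  congr 1
  · exact Finset.prod_congr rfl fun i hi => if_pos hi
  · exact Finset.prod_congr rfl fun i hi => if_neg (Finset.mem_sdiff.1 hi).2

lemma mu_mul_ind (p : ℝ) (A S : Finset (Sym2 V)) (hS : S ⊆ univ) :
    mu p S * (if A ⊆ S then 1 else 0)
      = ∏ i : Sym2 V, (if i ∈ S then p else if i ∈ A then 0 else 1 - p) := by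
  by_cases hA : A ⊆ S
  · have h1 : ∏ i : Sym2 V, (if i ∈ S then p else if i ∈ A then 0 else 1 - p)
        = ∏ i : Sym2 V, (if i ∈ S then p else 1 - p) := by
      refine Finset.prod_congr rfl fun i _ => ?_
      by_cases hiS : i ∈ S
      · simp [hiS]
      · have : i ∉ A := fun h => hiS (hA h)
        simp [hiS, this]
    rw [h1, if_pos hA, mul_one]
    have hu : (univ : Finset (Sym2 V)) = S ∪ (univ \ S) := (Finset.union_sdiff_of_subset hS).symm
    conv_rhs => rw [hu]
    rw [Finset.prod_union Finset.disjoint_sdiff]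
    have h2 : ∏ i ∈ S, (if i ∈ S then p else 1 - p) = p ^ S.card := by
      rw [Finset.prod_congr rfl (fun i hi => if_pos hi), Finset.prod_const]
    have h3 : ∏ i ∈ univ \ S, (if i ∈ S then p else 1 - p) = (1 - p) ^ (Fintype.card (Sym2 V) - S.card) := by
      rw [Finset.prod_congr rfl (fun i hi => if_neg (Finset.mem_sdiff.1 hi).2), Finset.prod_const,
        Finset.card_sdiff_of_subset hS, Finset.card_univ]
    rw [h2, h3]
    rfl
  · obtain ⟨e, heA, heS⟩ := Finset.not_subset.1 hA
    rw [if_neg hA, mul_zero]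
    rw [eq_comm]
    refine Finset.prod_eq_zero (Finset.mem_univ e) ?_
    simp [heS, heA]

lemma E_subset (p : ℝ) (A : Finset (Sym2 V)) :
    ∑ S ∈ (univ : Finset (Sym2 V)).powerset, mu p S * (if A ⊆ S then 1 else 0)
      = p ^ A.card := by
  rw [Finset.sum_congr rfl fun S hS => mu_mul_ind p A S (Finset.mem_powerset.1 hS)]
  rw [master]
  have h1 : ∀ i : Sym2 V, (p + if i ∈ A then 0 else 1 - p) = if i ∈ A then p else 1 := by
    intro i; split_ifs <;> ring
  rw [Finset.prod_congr rfl fun i _ => h1 i]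
  rw [Finset.prod_ite_mem, Finset.univ_inter, Finset.prod_const]

lemma E_total (p : ℝ) :
    ∑ S ∈ (univ : Finset (Sym2 V)).powerset, mu p S = 1 := by
  have := E_subset (V := V) p ∅
  simpa using this

lemma E_ind (p : ℝ) (e : Sym2 V) :
    ∑ S ∈ (univ : Finset (Sym2 V)).powerset, mu p S * ind e S = p := by
  have := E_subset p {e}
  simpa [ind, Finset.singleton_subset_iff] using this

lemma E_ind2 (p : ℝ) (e f : Sym2 V) :
    ∑ S ∈ (univ : Finset (Sym2 V)).powerset, mu p S * (ind e S * ind f S)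
      = if e = f then p else p ^ 2 := by
  by_cases hef : e = f
  · subst hef
    rw [if_pos rfl]
    have : ∀ S : Finset (Sym2 V), ind e S * ind e S = ind e S := by
      intro S; unfold ind; split_ifs <;> ring
    rw [Finset.sum_congr rfl fun S _ => by rw [this]]
    exact E_ind p e
  · rw [if_neg hef]
    have := E_subset p {e, f}
    rw [Finset.card_insert_of_notMem (by simp [hef]), Finset.card_singleton] at this
    rw [← this]
    refine Finset.sum_congr rfl fun S _ => ?_
    congr 1
    unfold ind
    by_cases he : e ∈ S <;> by_cases hf : f ∈ S <;>
      simp [Finset.insert_subset_iff, he, hf]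

lemma E_cov (p : ℝ) (e f : Sym2 V) :
    ∑ S ∈ (univ : Finset (Sym2 V)).powerset, mu p S * ((ind e S - p) * (ind f S - p))
      = if e = f then p * (1 - p) else 0 := by
  have expand : ∀ S : Finset (Sym2 V), mu p S * ((ind e S - p) * (ind f S - p))
      = mu p S * (ind e S * ind f S) - p * (mu p S * ind e S) - p * (mu p S * ind f S)
        + p ^ 2 * mu p S := by
    intro S; ring
  rw [Finset.sum_congr rfl fun S _ => expand S]
  rw [Finset.sum_add_distrib, Finset.sum_sub_distrib, Finset.sum_sub_distrib,
    ← Finset.mul_sum, ← Finset.mul_sum, ← Finset.mul_sum]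
  rw [E_ind2, E_ind, E_ind, E_total]
  split_ifs <;> ring

lemma mu_nonneg (p : ℝ) (hp0 : 0 ≤ p) (hp1 : p ≤ 1) (S : Finset (Sym2 V)) : 0 ≤ mu p S :=
  mul_nonneg (pow_nonneg hp0 _) (pow_nonneg (by linarith) _)

lemma const_mul_double_sum (c : ℝ) (g : V → V → ℝ) :
    c * ∑ u, ∑ v, g u v = ∑ u, ∑ v, c * g u v := by
  rw [Finset.mul_sum]
  exact Finset.sum_congr rfl fun u _ => Finset.mul_sum _ _ _

lemma E_Y (p : ℝ) (a : V → V → ℝ) :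
    ∑ S ∈ (univ : Finset (Sym2 V)).powerset, mu p S * Y a S = p * ∑ u, ∑ v, a u v := by
  have h1 : ∀ S : Finset (Sym2 V), mu p S * Y a S
      = ∑ u, ∑ v, a u v * (mu p S * ind s(u, v) S) := by
    intro S
    rw [Y, const_mul_double_sum]
    exact Finset.sum_congr rfl fun u _ => Finset.sum_congr rfl fun v _ => by ring
  rw [Finset.sum_congr rfl fun S _ => h1 S, Finset.sum_comm]
  rw [const_mul_double_sum]
  refine Finset.sum_congr rfl fun u _ => ?_
  rw [Finset.sum_comm]
  refine Finset.sum_congr rfl fun v _ => ?_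
  rw [← Finset.mul_sum, E_ind, mul_comm]

lemma single_count (a : V → V → ℝ) (u' v' : V) :
    ∑ x, ∑ y, (if x = u' ∧ y = v' then a x y else 0) = a u' v' := by
  have h : ∀ x y : V, (if x = u' ∧ y = v' then a x y else 0)
      = if x = u' then (if y = v' then a x y else 0) else 0 := by
    intro x y; split_ifs <;> simp_all
  rw [Finset.sum_congr rfl fun x _ => Finset.sum_congr rfl fun y _ => h x y]
  simp

lemma inner_count (a : V → V → ℝ) (hsym : ∀ u v, a u v = a v u)
    (hdiag : ∀ v, a v v = 0) (u v : V) :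
    ∑ x, ∑ y, a x y * (if s(x, y) = s(u, v) then (1:ℝ) else 0) = 2 * a u v := by
  by_cases huv : u = v
  · subst huv
    have h1 : ∀ x y : V, a x y * (if s(x, y) = s(u, u) then (1:ℝ) else 0)
        = if x = u ∧ y = u then a x y else 0 := by
      intro x y
      simp only [Sym2.eq_iff]
      split_ifs <;> simp_all <;> tauto
    rw [Finset.sum_congr rfl fun x _ => Finset.sum_congr rfl fun y _ => h1 x y]
    rw [single_count a u u, hdiag u]
    ring
  · have h1 : ∀ x y : V, a x y * (if s(x, y) = s(u, v) then (1:ℝ) else 0)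
        = (if x = u ∧ y = v then a x y else 0) + (if x = v ∧ y = u then a x y else 0) := by
      intro x y
      simp only [Sym2.eq_iff]
      by_cases c1 : x = u ∧ y = v <;> by_cases c2 : x = v ∧ y = u
      · exact absurd (c1.1.symm.trans c2.1) huv
      · rw [if_pos (Or.inl c1), if_pos c1, if_neg c2]; ring
      · rw [if_pos (Or.inr c2), if_neg c1, if_pos c2]; ring
      · rw [if_neg (by tauto), if_neg c1, if_neg c2]; ring
    rw [Finset.sum_congr rfl fun x _ => Finset.sum_congr rfl fun y _ => h1 x y]
    rw [Finset.sum_congr rfl fun x (_ : x ∈ univ) => Finset.sum_add_distrib,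
      Finset.sum_add_distrib]
    rw [single_count a u v, single_count a v u, hsym v u]
    ring

lemma sq_double_sum (g : V → V → ℝ) :
    (∑ u, ∑ v, g u v) ^ 2 = ∑ u, ∑ v, ∑ x, ∑ y, g u v * g x y := by
  rw [sq, Finset.sum_mul_sum]
  refine Eq.trans ?_ (Finset.sum_congr rfl fun u (_ : u ∈ univ) => Finset.sum_comm)
  refine Finset.sum_congr rfl fun u _ => Finset.sum_congr rfl fun x _ => ?_
  rw [Finset.sum_mul]
  exact Finset.sum_congr rfl fun v _ => Finset.mul_sum _ _ _

lemma E_Yvar (p : ℝ) (a : V → V → ℝ) (hsym : ∀ u v, a u v = a v u)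
    (hdiag : ∀ v, a v v = 0) :
    ∑ S ∈ (univ : Finset (Sym2 V)).powerset,
        mu p S * (∑ u, ∑ v, a u v * (ind s(u, v) S - p)) ^ 2
      = p * (1 - p) * (2 * ∑ u, ∑ v, (a u v) ^ 2) := by
  have h1 : ∀ S : Finset (Sym2 V),
      mu p S * (∑ u, ∑ v, a u v * (ind s(u, v) S - p)) ^ 2
      = ∑ u, ∑ v, ∑ x, ∑ y, a u v * a x y
          * (mu p S * ((ind s(u, v) S - p) * (ind s(x, y) S - p))) := by
    intro S
    rw [sq_double_sum, const_mul_double_sum]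
    refine Finset.sum_congr rfl fun u _ => Finset.sum_congr rfl fun v _ => ?_
    rw [const_mul_double_sum]
    exact Finset.sum_congr rfl fun x _ => Finset.sum_congr rfl fun y _ => by ring
  rw [Finset.sum_congr rfl fun S _ => h1 S]
  rw [Finset.sum_comm]
  have key : ∀ u : V,
      (∑ S ∈ (univ : Finset (Sym2 V)).powerset, ∑ v, ∑ x, ∑ y, a u v * a x y
          * (mu p S * ((ind s(u, v) S - p) * (ind s(x, y) S - p))))
      = ∑ v, (p * (1 - p) * (2 * (a u v) ^ 2)) := by
    intro u
    rw [Finset.sum_comm]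
    refine Finset.sum_congr rfl fun v _ => ?_
    rw [Finset.sum_comm]
    have key2 : ∀ x : V,
        (∑ S ∈ (univ : Finset (Sym2 V)).powerset, ∑ y, a u v * a x y
            * (mu p S * ((ind s(u, v) S - p) * (ind s(x, y) S - p))))
        = ∑ y, a u v * a x y * (if s(u, v) = s(x, y) then p * (1 - p) else 0) := by
      intro x
      rw [Finset.sum_comm]
      refine Finset.sum_congr rfl fun y _ => ?_
      rw [← Finset.mul_sum, E_cov]
    rw [Finset.sum_congr rfl fun x _ => key2 x]
    have h3 : ∀ x y : V, a u v * a x y * (if s(u, v) = s(x, y) then p * (1 - p) else 0)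
        = (p * (1 - p) * a u v) * (a x y * (if s(x, y) = s(u, v) then (1:ℝ) else 0)) := by
      intro x y
      by_cases h : s(u, v) = s(x, y)
      · rw [if_pos h, if_pos h.symm]; ring
      · rw [if_neg h, if_neg fun hh => h hh.symm]; ring
    rw [Finset.sum_congr rfl fun x _ => Finset.sum_congr rfl fun y _ => h3 x y]
    rw [← const_mul_double_sum, inner_count a hsym hdiag u v]
    ring
  rw [Finset.sum_congr rfl fun u _ => key u]
  have h4 : p * (1 - p) * (2 * ∑ u, ∑ v, (a u v) ^ 2)
      = ∑ u, ∑ v, p * (1 - p) * (2 * (a u v) ^ 2) := by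
    rw [show p * (1 - p) * (2 * ∑ u, ∑ v, (a u v) ^ 2)
        = (p * (1 - p) * 2) * ∑ u, ∑ v, (a u v) ^ 2 by ring]
    rw [const_mul_double_sum]
    exact Finset.sum_congr rfl fun u _ => Finset.sum_congr rfl fun v _ => by ring
  rw [h4]

lemma markov (p : ℝ) (hp0 : 0 ≤ p) (hp1 : p ≤ 1) (f : Finset (Sym2 V) → ℝ)
    (hf : ∀ S, 0 ≤ f S) (t : ℝ) (ht : 0 < t) :
    ∑ S ∈ (univ : Finset (Sym2 V)).powerset, (if t ≤ f S then mu p S else 0)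
      ≤ (∑ S ∈ (univ : Finset (Sym2 V)).powerset, mu p S * f S) / t := by
  rw [Finset.sum_div]
  refine Finset.sum_le_sum fun S _ => ?_
  split_ifs with h
  · rw [le_div_iff₀ ht]
    exact mul_le_mul_of_nonneg_left h (mu_nonneg p hp0 hp1 S)
  · exact div_nonneg (mul_nonneg (mu_nonneg p hp0 hp1 S) (hf S)) ht.le

lemma part_sum (P : Finpartition (univ : Finset V)) (g : V → ℝ) :
    ∑ A ∈ P.parts, ∑ u ∈ A, g u = ∑ u, g u := by
  conv_rhs => rw [show (univ : Finset V) = P.parts.biUnion id from P.biUnion_parts.symm]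
  rw [Finset.sum_biUnion P.supIndep.pairwiseDisjoint]
  rfl

lemma sum_parts_pairs (P : Finpartition (univ : Finset V)) (f : V → V → ℝ) :
    ∑ A ∈ P.parts, ∑ u ∈ A, ∑ v ∈ A, f u v
      = ∑ u, ∑ v, (if SameP P u v then f u v else 0) := by
  have h1 : ∀ A ∈ P.parts, ∑ u ∈ A, ∑ v ∈ A, f u v
      = ∑ u, ∑ v, (if u ∈ A ∧ v ∈ A then f u v else 0) := by
    intro A _
    have hv : ∀ u : V, ∑ v, (if u ∈ A ∧ v ∈ A then f u v else 0)
        = if u ∈ A then ∑ v ∈ A, f u v else 0 := by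
      intro u
      by_cases hu : u ∈ A
      · rw [if_pos hu]
        simp only [hu, true_and]
        rw [Finset.sum_ite_mem, Finset.univ_inter]
      · rw [if_neg hu]
        exact Finset.sum_eq_zero fun v _ => by simp [hu]
    rw [Finset.sum_congr rfl fun u (_ : u ∈ univ) => hv u, Finset.sum_ite_mem,
      Finset.univ_inter]
  rw [Finset.sum_congr rfl h1, Finset.sum_comm]
  refine Finset.sum_congr rfl fun u _ => ?_
  rw [Finset.sum_comm]
  refine Finset.sum_congr rfl fun v _ => ?_
  by_cases h : SameP P u v
  · obtain ⟨A₀, hA₀, huA₀, hvA₀⟩ := h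
    rw [if_pos ⟨A₀, hA₀, huA₀, hvA₀⟩]
    rw [Finset.sum_eq_single A₀]
    · rw [if_pos ⟨huA₀, hvA₀⟩]
    · intro A hA hAne
      rw [if_neg]
      rintro ⟨huA, -⟩
      exact hAne (P.eq_of_mem_parts hA hA₀ huA huA₀)
    · intro h'; exact absurd hA₀ h'
  · rw [if_neg h]
    refine Finset.sum_eq_zero fun A hA => ?_
    rw [if_neg]
    rintro ⟨huA, hvA⟩
    exact h ⟨A, hA, huA, hvA⟩

lemma sum_sq_le_sq_sum {ι : Type*} (s : Finset ι) (f : ι → ℝ) (hf : ∀ i ∈ s, 0 ≤ f i) :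
    ∑ i ∈ s, (f i) ^ 2 ≤ (∑ i ∈ s, f i) ^ 2 := by
  rw [sq (∑ i ∈ s, f i), Finset.sum_mul]
  refine Finset.sum_le_sum fun i hi => ?_
  rw [sq]
  exact mul_le_mul_of_nonneg_left (Finset.single_le_sum hf hi) (hf i hi)

lemma wVol_nonneg (w : V → V → ℝ) (hw : ∀ u v, 0 ≤ w u v) (X : Finset V) :
    0 ≤ wVol w X :=
  Finset.sum_nonneg fun u _ => Finset.sum_nonneg fun v _ => hw u v

lemma parts_vol_sum (w : V → V → ℝ) (P : Finpartition (univ : Finset V)) :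
    ∑ A ∈ P.parts, wVol w A = wVol w univ :=
  part_sum P (wDeg w)

lemma parts_edge_le (w : V → V → ℝ) (hw : ∀ u v, 0 ≤ w u v)
    (P : Finpartition (univ : Finset V)) :
    ∑ A ∈ P.parts, 2 * wEdge w A ≤ wVol w univ := by
  have h1 : ∀ A ∈ P.parts, 2 * wEdge w A ≤ wVol w A := by
    intro A _
    rw [wEdge, wVol, show (2 : ℝ) * ((1 / 2) * ∑ u ∈ A, ∑ v ∈ A, w u v)
      = ∑ u ∈ A, ∑ v ∈ A, w u v by ring]
    refine Finset.sum_le_sum fun u _ => ?_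
    rw [wDeg]
    exact Finset.sum_le_sum_of_subset_of_nonneg (Finset.subset_univ A)
      fun v _ _ => hw u v
  calc ∑ A ∈ P.parts, 2 * wEdge w A ≤ ∑ A ∈ P.parts, wVol w A :=
        Finset.sum_le_sum h1
    _ = wVol w univ := parts_vol_sum w P

lemma parts_edge_nonneg (w : V → V → ℝ) (hw : ∀ u v, 0 ≤ w u v)
    (P : Finpartition (univ : Finset V)) :
    0 ≤ ∑ A ∈ P.parts, 2 * wEdge w A := by
  refine Finset.sum_nonneg fun A _ => ?_
  have : 0 ≤ wEdge w A := by
    rw [wEdge]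
    refine mul_nonneg (by norm_num) ?_
    exact Finset.sum_nonneg fun u _ => Finset.sum_nonneg fun v _ => hw u v
  linarith

lemma score_le_one (w : V → V → ℝ) (hw : ∀ u v, 0 ≤ w u v)
    (P : Finpartition (univ : Finset V)) :
    wModScore w P ≤ 1 := by
  rw [wModScore]
  split_ifs with h
  · norm_num
  · have hvol : 0 < wVol w univ := lt_of_le_of_ne (wVol_nonneg w hw univ) (Ne.symm h)
    have h1 : (∑ A ∈ P.parts, 2 * wEdge w A) / wVol w univ ≤ 1 := by
      rw [div_le_one hvol]
      exact parts_edge_le w hw P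
    have h2 : 0 ≤ (∑ A ∈ P.parts, (wVol w A) ^ 2) / (wVol w univ) ^ 2 := by
      positivity
    linarith

lemma le_wModularity (w : V → V → ℝ) (P : Finpartition (univ : Finset V)) :
    wModScore w P ≤ wModularity w := by
  haveI : Nonempty (Finpartition (univ : Finset V)) := ⟨⊥⟩
  exact le_ciSup (Set.Finite.bddAbove (Set.finite_range _)) P

lemma wModularity_attained (w : V → V → ℝ) :
    ∃ P : Finpartition (univ : Finset V), wModularity w ≤ wModScore w P := by
  haveI : Nonempty (Finpartition (univ : Finset V)) := ⟨⊥⟩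
  obtain ⟨P, hP⟩ := Finite.exists_max (wModScore w (V := V))
  exact ⟨P, ciSup_le hP⟩

/-- the kept-weight function -/
noncomputable def wKeep (w : V → V → ℝ) (S : Finset (Sym2 V)) : V → V → ℝ :=
  fun u v => if s(u, v) ∈ S then w u v else 0

/-- coefficient function for the intra-part edge weight -/
noncomputable def aE (w : V → V → ℝ) (P : Finpartition (univ : Finset V)) : V → V → ℝ :=
  fun u v => if SameP P u v then w u v else 0

/-- coefficient function for the volume of a part -/
noncomputable def aA (w : V → V → ℝ) (A : Finset V) : V → V → ℝ :=
  fun u v => w u v * (((if u ∈ A then (1:ℝ) else 0) + (if v ∈ A then (1:ℝ) else 0)) / 2)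

lemma wKeep_eq (w : V → V → ℝ) (S : Finset (Sym2 V)) (u v : V) :
    wKeep w S u v = w u v * ind s(u, v) S := by
  rw [wKeep, ind]; split_ifs <;> ring

lemma vol_univ_eq (w : V → V → ℝ) : wVol w univ = ∑ u, ∑ v, w u v := rfl

lemma volKeep_univ (w : V → V → ℝ) (S : Finset (Sym2 V)) :
    wVol (wKeep w S) univ = Y w S := by
  rw [vol_univ_eq, Y]
  exact Finset.sum_congr rfl fun u _ => Finset.sum_congr rfl fun v _ => wKeep_eq w S u v

lemma edgeKeep_parts (w : V → V → ℝ) (P : Finpartition (univ : Finset V))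
    (S : Finset (Sym2 V)) :
    ∑ A ∈ P.parts, 2 * wEdge (wKeep w S) A = Y (aE w P) S := by
  have h1 : ∀ A ∈ P.parts, 2 * wEdge (wKeep w S) A = ∑ u ∈ A, ∑ v ∈ A, wKeep w S u v := by
    intro A _; rw [wEdge]; ring
  rw [Finset.sum_congr rfl h1, sum_parts_pairs, Y]
  refine Finset.sum_congr rfl fun u _ => Finset.sum_congr rfl fun v _ => ?_
  rw [wKeep_eq, aE]
  split_ifs <;> ring

lemma edge_parts (w : V → V → ℝ) (P : Finpartition (univ : Finset V)) :
    ∑ A ∈ P.parts, 2 * wEdge w A = ∑ u, ∑ v, aE w P u v := by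
  have h1 : ∀ A ∈ P.parts, 2 * wEdge w A = ∑ u ∈ A, ∑ v ∈ A, w u v := by
    intro A _; rw [wEdge]; ring
  rw [Finset.sum_congr rfl h1, sum_parts_pairs]
  rfl

lemma wKeep_symm (w : V → V → ℝ) (hsym : ∀ u v, w u v = w v u) (S : Finset (Sym2 V))
    (u v : V) : wKeep w S u v = wKeep w S v u := by
  rw [wKeep, wKeep, Sym2.eq_swap, hsym u v]

lemma vol_as_ite (g : V → V → ℝ) (A : Finset V) :
    wVol g A = ∑ u, ∑ v, (if u ∈ A then g u v else 0) := by
  have h1 : ∀ u : V, ∑ v, (if u ∈ A then g u v else 0) = if u ∈ A then wDeg g u else 0 := by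
    intro u
    by_cases hu : u ∈ A
    · rw [if_pos hu]; exact Finset.sum_congr rfl fun v _ => if_pos hu
    · rw [if_neg hu]; exact Finset.sum_eq_zero fun v _ => if_neg hu
  rw [Finset.sum_congr rfl fun u (_ : u ∈ univ) => h1 u, Finset.sum_ite_mem,
    Finset.univ_inter, wVol]

lemma vol_as_ite' (g : V → V → ℝ) (hgsym : ∀ u v, g u v = g v u) (A : Finset V) :
    wVol g A = ∑ u, ∑ v, (if v ∈ A then g u v else 0) := by
  rw [vol_as_ite g A, Finset.sum_comm]
  exact Finset.sum_congr rfl fun u _ => Finset.sum_congr rfl fun v _ => by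
    rw [hgsym u v]

lemma volKeep_A (w : V → V → ℝ) (hsym : ∀ u v, w u v = w v u) (S : Finset (Sym2 V))
    (A : Finset V) : wVol (wKeep w S) A = Y (aA w A) S := by
  have hg : ∀ u v, wKeep w S u v = wKeep w S v u := wKeep_symm w hsym S
  have h1 : ∀ u v : V, aA w A u v * ind s(u, v) S
      = (1/2 : ℝ) * ((if u ∈ A then wKeep w S u v else 0)
          + (if v ∈ A then wKeep w S u v else 0)) := by
    intro u v
    rw [aA, wKeep_eq]
    split_ifs <;> ring
  rw [Y, Finset.sum_congr rfl fun u (_ : u ∈ univ) => Finset.sum_congr rfl fun v _ => h1 u v]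
  rw [Finset.sum_congr rfl fun u (_ : u ∈ univ) => Finset.sum_congr rfl fun v (_ : v ∈ univ) =>
    (mul_add (1/2 : ℝ) _ _)]
  rw [Finset.sum_congr rfl fun u (_ : u ∈ univ) => Finset.sum_add_distrib,
    Finset.sum_add_distrib]
  rw [← const_mul_double_sum, ← const_mul_double_sum]
  rw [← vol_as_ite (wKeep w S) A, ← vol_as_ite' (wKeep w S) hg A]
  ring

lemma wKeep_univ (w : V → V → ℝ) : wKeep w (univ : Finset (Sym2 V)) = w := by
  funext u v
  exact if_pos (Finset.mem_univ _)

lemma Y_univ (a : V → V → ℝ) : Y a (univ : Finset (Sym2 V)) = ∑ u, ∑ v, a u v := by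
  rw [Y]
  refine Finset.sum_congr rfl fun u _ => Finset.sum_congr rfl fun v _ => ?_
  rw [ind, if_pos (Finset.mem_univ _), mul_one]

lemma volA_split (w : V → V → ℝ) (hsym : ∀ u v, w u v = w v u) (A : Finset V) :
    wVol w A = ∑ u, ∑ v, aA w A u v := by
  have := volKeep_A w hsym (univ : Finset (Sym2 V)) A
  rwa [wKeep_univ, Y_univ] at this

lemma Y_dev (p : ℝ) (a : V → V → ℝ) (S : Finset (Sym2 V)) :
    Y a S - p * (∑ u, ∑ v, a u v) = ∑ u, ∑ v, a u v * (ind s(u, v) S - p) := by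
  rw [Y, const_mul_double_sum, ← Finset.sum_sub_distrib]
  refine Finset.sum_congr rfl fun u _ => ?_
  rw [← Finset.sum_sub_distrib]
  exact Finset.sum_congr rfl fun v _ => by ring

lemma double_sum_sq_le (b : ℝ) (a : V → V → ℝ) (h0 : ∀ u v, 0 ≤ a u v)
    (hb : ∀ u v, a u v ≤ b) :
    ∑ u, ∑ v, (a u v) ^ 2 ≤ b * ∑ u, ∑ v, a u v := by
  rw [const_mul_double_sum]
  refine Finset.sum_le_sum fun u _ => Finset.sum_le_sum fun v _ => ?_
  nlinarith [h0 u v, hb u v]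

lemma arith_core {ε δ p M X E' E₀ D D₀ W C : ℝ}
    (hδ0 : 0 < δ) (hδ4 : δ ≤ 1/4) (hδε : 25 * δ ≤ ε)
    (hp0 : 0 < p) (hM : 0 < M)
    (hX : (X - p * M)^2 < δ^2 * p^2 * M^2)
    (hE : (E' - p * E₀)^2 < δ^2 * p^2 * M^2)
    (hW0 : 0 ≤ W) (hWle : W ≤ δ^2 * p^2 * M^2)
    (hE₀0 : 0 ≤ E₀) (hE₀M : E₀ ≤ M)
    (hD₀0 : 0 ≤ D₀) (hD₀M : D₀ ≤ M ^ 2)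
    (hCS : C ^ 2 ≤ D₀ * W)
    (hD : D = p^2 * D₀ + 2 * p * C + W) :
    0 < X ∧ (E₀ / M - D₀ / M ^ 2) - ε < E' / X - D / X ^ 2 := by
  have hpM : 0 < p * M := mul_pos hp0 hM
  have hδpM : 0 < δ * (p * M) := mul_pos hδ0 hpM
  have hXb : -(δ * (p * M)) < X - p * M ∧ X - p * M < δ * (p * M) := by
    refine abs_lt_of_sq_lt_sq' ?_ hδpM.le
    calc (X - p * M) ^ 2 < δ^2 * p^2 * M^2 := hX
      _ = (δ * (p * M)) ^ 2 := by ring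
  have hXlo : (1 - δ) * (p * M) ≤ X := by nlinarith [hXb.1]
  have hXhi : X ≤ (1 + δ) * (p * M) := by nlinarith [hXb.2]
  have hEb : -(δ * (p * M)) < E' - p * E₀ ∧ E' - p * E₀ < δ * (p * M) := by
    refine abs_lt_of_sq_lt_sq' ?_ hδpM.le
    calc (E' - p * E₀) ^ 2 < δ^2 * p^2 * M^2 := hE
      _ = (δ * (p * M)) ^ 2 := by ring
  have hElo : p * E₀ - δ * (p * M) ≤ E' := by linarith [hEb.1]
  have h1δ : (0:ℝ) < 1 - δ := by linarith
  have hX0 : 0 < X := lt_of_lt_of_le (mul_pos h1δ hpM) hXlo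
  refine ⟨hX0, ?_⟩
  have hK0 : 0 ≤ δ * (p * M) * M := by positivity
  have hC : C ≤ δ * (p * M) * M := by
    have hCsq : C ^ 2 ≤ (δ * (p * M) * M) ^ 2 := by
      calc C ^ 2 ≤ D₀ * W := hCS
        _ ≤ M ^ 2 * (δ^2 * p^2 * M^2) := mul_le_mul hD₀M hWle hW0 (sq_nonneg M)
        _ = (δ * (p * M) * M) ^ 2 := by ring
    exact le_of_abs_le (abs_le_of_sq_le_sq hCsq hK0)
  have hdd : δ * δ ≤ (1/4) * δ := mul_le_mul_of_nonneg_right hδ4 hδ0.le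
  have key1 : E₀ / M - 4 * δ ≤ E' / X := by
    have hnum : (E₀ - 4 * δ * M) * X ≤ E' * M := by
      have q1 : 0 ≤ E₀ * (p * M - X + δ * (p * M)) := mul_nonneg hE₀0 (by linarith [hXb.2])
      have q2 : 0 ≤ (M - E₀) * (δ * (p * M)) := mul_nonneg (by linarith) hδpM.le
      have q3 : M * (p * E₀ - δ * (p * M)) ≤ M * E' := mul_le_mul_of_nonneg_left hElo hM.le
      have q4 : (4 * δ * M) * ((1 - δ) * (p * M)) ≤ (4 * δ * M) * X :=
        mul_le_mul_of_nonneg_left hXlo (by positivity)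
      have q5 : δ * δ * (p * M * M) ≤ (1/4) * δ * (p * M * M) :=
        mul_le_mul_of_nonneg_right hdd (le_of_lt (mul_pos hpM hM))
      nlinarith [q1, q2, q3, q4, q5, mul_pos hδpM hM]
    have h2 : (E₀ - 4 * δ * M) / M ≤ E' / X := by
      rw [div_le_div_iff₀ hM hX0]
      exact hnum
    calc E₀ / M - 4 * δ = (E₀ - 4 * δ * M) / M := by field_simp
      _ ≤ E' / X := h2
  have key2 : D / X ^ 2 ≤ D₀ / M ^ 2 + 20 * δ := by
    have hX2 : 0 < X ^ 2 := by positivity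
    have hM2 : 0 < M ^ 2 := by positivity
    have hXsq : (1 - δ)^2 * (p * M)^2 ≤ X ^ 2 := by
      have h0 : 0 ≤ (1 - δ) * (p * M) := le_of_lt (mul_pos h1δ hpM)
      have := pow_le_pow_left₀ h0 hXlo 2
      nlinarith [this]
    have h5 : D ≤ p^2 * (D₀ + (9/4) * δ * M^2) := by
      have q5 : 2 * p * C ≤ 2 * p * (δ * (p * M) * M) :=
        mul_le_mul_of_nonneg_left hC (by positivity)
      have q6 : (δ * δ) * (p^2 * M^2) ≤ ((1/4) * δ) * (p^2 * M^2) :=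
        mul_le_mul_of_nonneg_right hdd (by positivity)
      nlinarith [q5, hWle, q6]
    have h6 : D₀ + (9/4) * δ * M^2 ≤ (D₀ + 20 * δ * M^2) * (1 - δ)^2 := by
      have f1 : δ * D₀ ≤ δ * M^2 := mul_le_mul_of_nonneg_left hD₀M hδ0.le
      have f2 : (δ * δ) * M^2 ≤ ((1/4) * δ) * M^2 :=
        mul_le_mul_of_nonneg_right hdd (sq_nonneg M)
      have f3 : 0 ≤ (δ * δ) * D₀ := mul_nonneg (mul_nonneg hδ0.le hδ0.le) hD₀0
      have f4 : 0 ≤ (δ * δ * δ) * M^2 := mul_nonneg (by positivity) (sq_nonneg M)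
      nlinarith [f1, f2, f3, f4]
    have hD20 : 0 ≤ D₀ + 20 * δ * M^2 := by
      have : 0 ≤ 20 * δ * M^2 := by positivity
      linarith
    have h7 : D * M ^ 2 ≤ (D₀ + 20 * δ * M^2) * X ^ 2 := by
      have r1 : D * M^2 ≤ p^2 * (D₀ + (9/4) * δ * M^2) * M^2 :=
        mul_le_mul_of_nonneg_right h5 (sq_nonneg M)
      have r2 : p^2 * (D₀ + (9/4) * δ * M^2) * M^2
          ≤ p^2 * ((D₀ + 20 * δ * M^2) * (1 - δ)^2) * M^2 :=
        mul_le_mul_of_nonneg_right (mul_le_mul_of_nonneg_left h6 (sq_nonneg p)) (sq_nonneg M)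
      have r3 : (D₀ + 20 * δ * M^2) * ((1 - δ)^2 * (p * M)^2)
          ≤ (D₀ + 20 * δ * M^2) * X ^ 2 :=
        mul_le_mul_of_nonneg_left hXsq hD20
      nlinarith [r1, r2, r3]
    have h8 : D / X ^ 2 ≤ (D₀ + 20 * δ * M^2) / M ^ 2 := by
      rw [div_le_div_iff₀ hX2 hM2]
      exact h7
    calc D / X ^ 2 ≤ (D₀ + 20 * δ * M^2) / M ^ 2 := h8
      _ = D₀ / M ^ 2 + 20 * δ := by field_simp
  have h24 : 24 * δ < ε := by linarith
  linarith [key1, key2]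

lemma det_core {ε δ p : ℝ} (w : V → V → ℝ) (P : Finpartition (univ : Finset V))
    (hw : ∀ u v, 0 ≤ w u v)
    (hδ0 : 0 < δ) (hδ4 : δ ≤ 1/4) (hδε : 25 * δ ≤ ε)
    (hp0 : 0 < p) (hM : 0 < wVol w univ)
    (hPmax : wModularity w ≤ wModScore w P)
    (S : Finset (Sym2 V))
    (hX : (wVol (wKeep w S) univ - p * wVol w univ)^2 < δ^2 * p^2 * (wVol w univ)^2)
    (hE : ((∑ A ∈ P.parts, 2 * wEdge (wKeep w S) A)
        - p * ∑ A ∈ P.parts, 2 * wEdge w A)^2 < δ^2 * p^2 * (wVol w univ)^2)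
    (hWs : (∑ A ∈ P.parts, (wVol (wKeep w S) A - p * wVol w A)^2)
        < δ^2 * p^2 * (wVol w univ)^2) :
    wModularity w - ε < wModularity (wKeep w S) := by
  have hD₀M : (∑ A ∈ P.parts, (wVol w A) ^ 2) ≤ (wVol w univ) ^ 2 := by
    have h1 := sum_sq_le_sq_sum P.parts (fun A => wVol w A)
      (fun A _ => wVol_nonneg w hw A)
    rwa [parts_vol_sum w P] at h1
  have hCS : (∑ A ∈ P.parts, (wVol w A) * (wVol (wKeep w S) A - p * wVol w A)) ^ 2
      ≤ (∑ A ∈ P.parts, (wVol w A) ^ 2)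
        * (∑ A ∈ P.parts, (wVol (wKeep w S) A - p * wVol w A) ^ 2) :=
    Finset.sum_mul_sq_le_sq_mul_sq P.parts (fun A => wVol w A)
      (fun A => wVol (wKeep w S) A - p * wVol w A)
  have hD : (∑ A ∈ P.parts, (wVol (wKeep w S) A) ^ 2)
      = p^2 * (∑ A ∈ P.parts, (wVol w A) ^ 2)
        + 2 * p * (∑ A ∈ P.parts, (wVol w A) * (wVol (wKeep w S) A - p * wVol w A))
        + (∑ A ∈ P.parts, (wVol (wKeep w S) A - p * wVol w A) ^ 2) := by
    rw [Finset.mul_sum, Finset.mul_sum, ← Finset.sum_add_distrib, ← Finset.sum_add_distrib]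
    exact Finset.sum_congr rfl fun A _ => by ring
  obtain ⟨hX0, hkey⟩ := arith_core (X := wVol (wKeep w S) univ)
    (E' := ∑ A ∈ P.parts, 2 * wEdge (wKeep w S) A)
    (E₀ := ∑ A ∈ P.parts, 2 * wEdge w A)
    (D := ∑ A ∈ P.parts, (wVol (wKeep w S) A) ^ 2)
    (D₀ := ∑ A ∈ P.parts, (wVol w A) ^ 2)
    (W := ∑ A ∈ P.parts, (wVol (wKeep w S) A - p * wVol w A) ^ 2)
    (C := ∑ A ∈ P.parts, (wVol w A) * (wVol (wKeep w S) A - p * wVol w A))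
    hδ0 hδ4 hδε hp0 hM hX hE
    (Finset.sum_nonneg fun A _ => sq_nonneg _) (le_of_lt hWs)
    (parts_edge_nonneg w hw P) (parts_edge_le w hw P)
    (Finset.sum_nonneg fun A _ => sq_nonneg _) hD₀M hCS hD
  have hscoreP : wModScore w P = (∑ A ∈ P.parts, 2 * wEdge w A) / wVol w univ
      - (∑ A ∈ P.parts, (wVol w A) ^ 2) / (wVol w univ) ^ 2 := by
    rw [wModScore, if_neg hM.ne']
  have hscoreP' : wModScore (wKeep w S) P
      = (∑ A ∈ P.parts, 2 * wEdge (wKeep w S) A) / wVol (wKeep w S) univ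
        - (∑ A ∈ P.parts, (wVol (wKeep w S) A) ^ 2) / (wVol (wKeep w S) univ) ^ 2 := by
    rw [wModScore, if_neg hX0.ne']
  calc wModularity w - ε ≤ wModScore w P - ε := by linarith [hPmax]
    _ < wModScore (wKeep w S) P := by rw [hscoreP, hscoreP']; linarith [hkey]
    _ ≤ wModularity (wKeep w S) := le_wModularity (wKeep w S) P


-- properties of the coefficient functions
lemma aE_symm (w : V → V → ℝ) (hsym : ∀ u v, w u v = w v u)
    (P : Finpartition (univ : Finset V)) : ∀ u v, aE w P u v = aE w P v u := by
  intro u v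
  rw [aE, aE]
  by_cases h : SameP P u v
  · obtain ⟨A, hA, h1, h2⟩ := h
    rw [if_pos ⟨A, hA, h1, h2⟩, if_pos ⟨A, hA, h2, h1⟩, hsym]
  · rw [if_neg h, if_neg fun h' => h (by obtain ⟨A, hA, h1, h2⟩ := h'; exact ⟨A, hA, h2, h1⟩)]

lemma aE_diag (w : V → V → ℝ) (hdiag : ∀ v, w v v = 0)
    (P : Finpartition (univ : Finset V)) : ∀ v, aE w P v v = 0 := by
  intro v
  rw [aE]
  split_ifs
  · exact hdiag v
  · rfl

lemma aE_nonneg (w : V → V → ℝ) (hw : ∀ u v, 0 ≤ w u v)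
    (P : Finpartition (univ : Finset V)) : ∀ u v, 0 ≤ aE w P u v := by
  intro u v
  rw [aE]; split_ifs
  · exact hw u v
  · exact le_refl 0

lemma aE_le (b : ℝ) (hb0 : 0 ≤ b) (w : V → V → ℝ) (hbb : ∀ u v, w u v ≤ b)
    (P : Finpartition (univ : Finset V)) : ∀ u v, aE w P u v ≤ b := by
  intro u v
  rw [aE]; split_ifs
  · exact hbb u v
  · exact hb0

lemma aA_symm (w : V → V → ℝ) (hsym : ∀ u v, w u v = w v u) (A : Finset V) :
    ∀ u v, aA w A u v = aA w A v u := by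
  intro u v
  rw [aA, aA, hsym u v]
  ring

lemma aA_diag (w : V → V → ℝ) (hdiag : ∀ v, w v v = 0) (A : Finset V) :
    ∀ v, aA w A v v = 0 := by
  intro v
  rw [aA, hdiag v]
  ring

lemma aA_half_mem (A : Finset V) (u v : V) :
    0 ≤ (((if u ∈ A then (1:ℝ) else 0) + (if v ∈ A then (1:ℝ) else 0)) / 2)
      ∧ (((if u ∈ A then (1:ℝ) else 0) + (if v ∈ A then (1:ℝ) else 0)) / 2) ≤ 1 := by
  constructor <;> · split_ifs <;> norm_num

lemma aA_nonneg (w : V → V → ℝ) (hw : ∀ u v, 0 ≤ w u v) (A : Finset V) :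
    ∀ u v, 0 ≤ aA w A u v := by
  intro u v
  exact mul_nonneg (hw u v) (aA_half_mem A u v).1

lemma aA_le (b : ℝ) (w : V → V → ℝ) (hw : ∀ u v, 0 ≤ w u v) (hbb : ∀ u v, w u v ≤ b)
    (A : Finset V) : ∀ u v, aA w A u v ≤ b := by
  intro u v
  calc aA w A u v ≤ w u v * 1 :=
        mul_le_mul_of_nonneg_left (aA_half_mem A u v).2 (hw u v)
    _ = w u v := mul_one _
    _ ≤ b := hbb u v

/-- expectation of the squared deviation of `Y a` -/
lemma E_Ydev (p : ℝ) (a : V → V → ℝ) (hsym : ∀ u v, a u v = a v u)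
    (hdiag : ∀ v, a v v = 0) :
    ∑ S ∈ (univ : Finset (Sym2 V)).powerset,
        mu p S * (Y a S - p * ∑ u, ∑ v, a u v) ^ 2
      = p * (1 - p) * (2 * ∑ u, ∑ v, (a u v) ^ 2) := by
  rw [Finset.sum_congr rfl fun S (_ : S ∈ (univ : Finset (Sym2 V)).powerset) => by
    rw [Y_dev p a S]]
  exact E_Yvar p a hsym hdiag

/-- Chebyshev-type tail bound for a single `Y a` -/
lemma cheb (b p : ℝ) (hb0 : 0 ≤ b) (hp0 : 0 < p) (hp1 : p ≤ 1) (a : V → V → ℝ)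
    (hsym : ∀ u v, a u v = a v u) (hdiag : ∀ v, a v v = 0)
    (h0 : ∀ u v, 0 ≤ a u v) (hab : ∀ u v, a u v ≤ b) (t : ℝ) (ht : 0 < t) :
    ∑ S ∈ (univ : Finset (Sym2 V)).powerset,
        (if t ≤ (Y a S - p * ∑ u, ∑ v, a u v) ^ 2 then mu p S else 0)
      ≤ 2 * p * (b * ∑ u, ∑ v, a u v) / t := by
  refine le_trans (markov p hp0.le hp1 _ (fun S => sq_nonneg _) t ht) ?_
  rw [E_Ydev p a hsym hdiag]
  have hQ0 : 0 ≤ ∑ u, ∑ v, (a u v) ^ 2 :=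
    Finset.sum_nonneg fun u _ => Finset.sum_nonneg fun v _ => sq_nonneg _
  have hQle := double_sum_sq_le b a h0 hab
  have hnum : p * (1 - p) * (2 * ∑ u, ∑ v, (a u v) ^ 2)
      ≤ 2 * p * (b * ∑ u, ∑ v, a u v) := by
    nlinarith [mul_le_mul_of_nonneg_left hQle (by positivity : (0:ℝ) ≤ 2 * p),
      mul_nonneg (mul_nonneg hp0.le hp0.le) hQ0]
  exact (div_le_div_iff_of_pos_right ht).mpr hnum

/-- tail bound for the part-volume deviations -/
lemma bad3_bound (b p : ℝ) (hb0 : 0 ≤ b) (hp0 : 0 < p) (hp1 : p ≤ 1)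
    (w : V → V → ℝ) (hsym : ∀ u v, w u v = w v u) (hw : ∀ u v, 0 ≤ w u v)
    (hdiag : ∀ v, w v v = 0) (hbb : ∀ u v, w u v ≤ b)
    (P : Finpartition (univ : Finset V)) (t : ℝ) (ht : 0 < t) :
    ∑ S ∈ (univ : Finset (Sym2 V)).powerset,
        (if t ≤ ∑ A ∈ P.parts, (Y (aA w A) S - p * ∑ u, ∑ v, aA w A u v) ^ 2
          then mu p S else 0)
      ≤ 2 * p * (b * wVol w univ) / t := by
  refine le_trans (markov p hp0.le hp1 _
    (fun S => Finset.sum_nonneg fun A _ => sq_nonneg _) t ht) ?_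
  refine (div_le_div_iff_of_pos_right ht).mpr ?_
  have hswap : ∑ S ∈ (univ : Finset (Sym2 V)).powerset,
      mu p S * ∑ A ∈ P.parts, (Y (aA w A) S - p * ∑ u, ∑ v, aA w A u v) ^ 2
      = ∑ A ∈ P.parts, ∑ S ∈ (univ : Finset (Sym2 V)).powerset,
          mu p S * (Y (aA w A) S - p * ∑ u, ∑ v, aA w A u v) ^ 2 := by
    rw [Finset.sum_congr rfl fun S (_ : S ∈ (univ : Finset (Sym2 V)).powerset) =>
      Finset.mul_sum _ _ _]
    exact Finset.sum_comm
  rw [hswap]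
  have hA : ∀ A ∈ P.parts,
      (∑ S ∈ (univ : Finset (Sym2 V)).powerset,
        mu p S * (Y (aA w A) S - p * ∑ u, ∑ v, aA w A u v) ^ 2)
      ≤ 2 * p * (b * wVol w A) := by
    intro A _
    rw [E_Ydev p (aA w A) (aA_symm w hsym A) (aA_diag w hdiag A)]
    have hQ0 : 0 ≤ ∑ u, ∑ v, (aA w A u v) ^ 2 :=
      Finset.sum_nonneg fun u _ => Finset.sum_nonneg fun v _ => sq_nonneg _
    have hQle := double_sum_sq_le b (aA w A) (aA_nonneg w hw A) (aA_le b w hw hbb A)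
    rw [← volA_split w hsym A] at hQle
    nlinarith [mul_le_mul_of_nonneg_left hQle (by positivity : (0:ℝ) ≤ 2 * p),
      mul_nonneg (mul_nonneg hp0.le hp0.le) hQ0]
  calc ∑ A ∈ P.parts, ∑ S ∈ (univ : Finset (Sym2 V)).powerset,
        mu p S * (Y (aA w A) S - p * ∑ u, ∑ v, aA w A u v) ^ 2
      ≤ ∑ A ∈ P.parts, 2 * p * (b * wVol w A) := Finset.sum_le_sum hA
    _ = 2 * p * (b * wVol w univ) := by
        rw [← parts_vol_sum w P, Finset.mul_sum, Finset.mul_sum]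

end MS
end MSproof

/-- Weighted analogue of Theorem 1: for every b > 0 and ε > 0 there is
c = c(b, ε) > 0 such that for every 0 < p ≤ 1 and every b-bounded weight function w
on a finite nonempty vertex set V (symmetric, nonnegative, zero on the diagonal)
with vol_w(V)·p ≥ c, the random weight function w_p satisfies
q*(w_p) > q*(w) − ε with probability at least 1 − ε. -/
theorem statement11 (b ε : ℝ) (hb : 0 < b) (hε : 0 < ε) :
    ∃ c : ℝ, 0 < c ∧
      ∀ (V : Type) [Fintype V] [DecidableEq V] [Nonempty V] (w : V → V → ℝ),
        (∀ u v, w u v = w v u) → (∀ u v, 0 ≤ w u v) → (∀ v, w v v = 0) →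
        (∀ u v, w u v ≤ b) →
        ∀ p : ℝ, 0 < p → p ≤ 1 → c ≤ wVol w univ * p →
          1 - ε ≤ wProb w p (fun w' => wModularity w - ε < wModularity w') := by
  obtain ⟨δ, hδ0, hδ4, hδε⟩ : ∃ δ : ℝ, 0 < δ ∧ δ ≤ 1/4 ∧ 25 * δ ≤ ε :=
    ⟨min (1/4) (ε/25), lt_min (by norm_num) (by linarith),
      min_le_left _ _, by have := min_le_right (1/4 : ℝ) (ε/25); linarith⟩
  refine ⟨6 * b / (δ^2 * ε) + 1, by positivity, ?_⟩
  intro V _ _ _ w hsym hw hdiag hbb p hp0 hp1 hc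
  classical
  have hc0 : (0:ℝ) < 6 * b / (δ^2 * ε) + 1 := by positivity
  have hM0 : 0 ≤ wVol w univ := MS.wVol_nonneg w hw univ
  have hMp : 0 < wVol w univ * p := lt_of_lt_of_le hc0 hc
  have hM : 0 < wVol w univ := by
    have h1 : wVol w univ * p ≤ wVol w univ := by
      have := mul_le_mul_of_nonneg_left hp1 hM0
      simpa using this
    linarith
  have hpM : 0 < p * wVol w univ := by linarith [hMp, mul_comm p (wVol w univ)]
  obtain ⟨P, hPmax⟩ := MS.wModularity_attained w
  have ht : (0:ℝ) < δ^2 * p^2 * (wVol w univ)^2 := by positivity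
  -- the three tail bounds
  have hb1 := MS.cheb b p hb.le hp0 hp1 w hsym hdiag hw hbb
    (δ^2 * p^2 * (wVol w univ)^2) ht
  have hb2 := MS.cheb b p hb.le hp0 hp1 (MS.aE w P) (MS.aE_symm w hsym P)
    (MS.aE_diag w hdiag P) (MS.aE_nonneg w hw P) (MS.aE_le b hb.le w hbb P)
    (δ^2 * p^2 * (wVol w univ)^2) ht
  have hb3 := MS.bad3_bound b p hb.le hp0 hp1 w hsym hw hdiag hbb P
    (δ^2 * p^2 * (wVol w univ)^2) ht
  -- the numerator of hb2 is at most that of hb1's bound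
  have hb2' : ∑ S ∈ (univ : Finset (Sym2 V)).powerset,
      (if δ^2 * p^2 * (wVol w univ)^2
          ≤ (MS.Y (MS.aE w P) S - p * ∑ u, ∑ v, MS.aE w P u v) ^ 2
        then MS.mu p S else 0)
      ≤ 2 * p * (b * wVol w univ) / (δ^2 * p^2 * (wVol w univ)^2) := by
    refine le_trans hb2 ?_
    refine (div_le_div_iff_of_pos_right ht).mpr ?_
    have h1 : (∑ u, ∑ v, MS.aE w P u v) ≤ wVol w univ := by
      rw [← MS.edge_parts w P]
      exact MS.parts_edge_le w hw P
    nlinarith [mul_le_mul_of_nonneg_left h1 (by positivity : (0:ℝ) ≤ 2 * p * b)]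
  have hb1' : ∑ S ∈ (univ : Finset (Sym2 V)).powerset,
      (if δ^2 * p^2 * (wVol w univ)^2
          ≤ (MS.Y w S - p * ∑ u, ∑ v, w u v) ^ 2
        then MS.mu p S else 0)
      ≤ 2 * p * (b * wVol w univ) / (δ^2 * p^2 * (wVol w univ)^2) := hb1
  -- good event
  set t := δ^2 * p^2 * (wVol w univ)^2 with htdef
  have hGoodImp : ∀ S : Finset (Sym2 V),
      ((MS.Y w S - p * ∑ u, ∑ v, w u v) ^ 2 < t
        ∧ (MS.Y (MS.aE w P) S - p * ∑ u, ∑ v, MS.aE w P u v) ^ 2 < t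
        ∧ (∑ A ∈ P.parts, (MS.Y (MS.aA w A) S - p * ∑ u, ∑ v, MS.aA w A u v) ^ 2) < t) →
      wModularity w - ε < wModularity (MS.wKeep w S) := by
    intro S hg
    have hX : (wVol (MS.wKeep w S) univ - p * wVol w univ)^2
        < δ^2 * p^2 * (wVol w univ)^2 := by
      rw [MS.volKeep_univ w S]
      exact hg.1
    have hE : ((∑ A ∈ P.parts, 2 * wEdge (MS.wKeep w S) A)
        - p * ∑ A ∈ P.parts, 2 * wEdge w A)^2 < δ^2 * p^2 * (wVol w univ)^2 := by
      rw [MS.edgeKeep_parts w P S, MS.edge_parts w P]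
      exact hg.2.1
    have hWs : (∑ A ∈ P.parts, (wVol (MS.wKeep w S) A - p * wVol w A)^2)
        < δ^2 * p^2 * (wVol w univ)^2 := by
      have heq : (∑ A ∈ P.parts, (wVol (MS.wKeep w S) A - p * wVol w A)^2)
          = ∑ A ∈ P.parts, (MS.Y (MS.aA w A) S - p * ∑ u, ∑ v, MS.aA w A u v) ^ 2 :=
        Finset.sum_congr rfl fun A _ => by
          rw [MS.volKeep_A w hsym S A, MS.volA_split w hsym A]
      rw [heq]
      exact hg.2.2
    exact MS.det_core w P hw hδ0 hδ4 hδε hp0 hM hPmax S hX hE hWs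
  -- split total mass
  have hsplit : ∑ S ∈ (univ : Finset (Sym2 V)).powerset,
        (if (MS.Y w S - p * ∑ u, ∑ v, w u v) ^ 2 < t
            ∧ (MS.Y (MS.aE w P) S - p * ∑ u, ∑ v, MS.aE w P u v) ^ 2 < t
            ∧ (∑ A ∈ P.parts, (MS.Y (MS.aA w A) S - p * ∑ u, ∑ v, MS.aA w A u v) ^ 2) < t
          then MS.mu p S else 0)
      + ∑ S ∈ (univ : Finset (Sym2 V)).powerset,
        (if (MS.Y w S - p * ∑ u, ∑ v, w u v) ^ 2 < t
            ∧ (MS.Y (MS.aE w P) S - p * ∑ u, ∑ v, MS.aE w P u v) ^ 2 < t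
            ∧ (∑ A ∈ P.parts, (MS.Y (MS.aA w A) S - p * ∑ u, ∑ v, MS.aA w A u v) ^ 2) < t
          then 0 else MS.mu p S) = 1 := by
    rw [← Finset.sum_add_distrib]
    rw [Finset.sum_congr rfl fun S (_ : S ∈ (univ : Finset (Sym2 V)).powerset) => by
      split_ifs <;> ring]
    exact MS.E_total p
  -- union bound on the bad part
  have hbad : ∑ S ∈ (univ : Finset (Sym2 V)).powerset,
        (if (MS.Y w S - p * ∑ u, ∑ v, w u v) ^ 2 < t
            ∧ (MS.Y (MS.aE w P) S - p * ∑ u, ∑ v, MS.aE w P u v) ^ 2 < t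
            ∧ (∑ A ∈ P.parts, (MS.Y (MS.aA w A) S - p * ∑ u, ∑ v, MS.aA w A u v) ^ 2) < t
          then 0 else MS.mu p S) ≤ ε := by
    have hpw : ∀ S ∈ (univ : Finset (Sym2 V)).powerset,
        (if (MS.Y w S - p * ∑ u, ∑ v, w u v) ^ 2 < t
            ∧ (MS.Y (MS.aE w P) S - p * ∑ u, ∑ v, MS.aE w P u v) ^ 2 < t
            ∧ (∑ A ∈ P.parts, (MS.Y (MS.aA w A) S - p * ∑ u, ∑ v, MS.aA w A u v) ^ 2) < t
          then 0 else MS.mu p S)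
        ≤ (if t ≤ (MS.Y w S - p * ∑ u, ∑ v, w u v) ^ 2 then MS.mu p S else 0)
          + (if t ≤ (MS.Y (MS.aE w P) S - p * ∑ u, ∑ v, MS.aE w P u v) ^ 2
              then MS.mu p S else 0)
          + (if t ≤ (∑ A ∈ P.parts, (MS.Y (MS.aA w A) S - p * ∑ u, ∑ v, MS.aA w A u v) ^ 2)
              then MS.mu p S else 0) := by
      intro S _
      have hmu := MS.mu_nonneg p hp0.le hp1 S
      by_cases hg : (MS.Y w S - p * ∑ u, ∑ v, w u v) ^ 2 < t
          ∧ (MS.Y (MS.aE w P) S - p * ∑ u, ∑ v, MS.aE w P u v) ^ 2 < t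
          ∧ (∑ A ∈ P.parts, (MS.Y (MS.aA w A) S - p * ∑ u, ∑ v, MS.aA w A u v) ^ 2) < t
      · rw [if_pos hg]
        have : ∀ c : Prop, ∀ _ : Decidable c, (0:ℝ) ≤ if c then MS.mu p S else 0 := by
          intro c _; split_ifs <;> simp [hmu]
        positivity
      · rw [if_neg hg]
        rcases not_and_or.1 hg with h1 | h23
        · rw [if_pos (not_lt.1 h1)]
          have h2 : (0:ℝ) ≤ if t ≤ (MS.Y (MS.aE w P) S - p * ∑ u, ∑ v, MS.aE w P u v) ^ 2
              then MS.mu p S else 0 := by split_ifs <;> simp [hmu]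
          have h3 : (0:ℝ) ≤ if t ≤ (∑ A ∈ P.parts,
              (MS.Y (MS.aA w A) S - p * ∑ u, ∑ v, MS.aA w A u v) ^ 2)
              then MS.mu p S else 0 := by split_ifs <;> simp [hmu]
          linarith
        · rcases not_and_or.1 h23 with h2 | h3
          · rw [if_pos (not_lt.1 h2)]
            have h1' : (0:ℝ) ≤ if t ≤ (MS.Y w S - p * ∑ u, ∑ v, w u v) ^ 2
                then MS.mu p S else 0 := by split_ifs <;> simp [hmu]
            have h3' : (0:ℝ) ≤ if t ≤ (∑ A ∈ P.parts,
                (MS.Y (MS.aA w A) S - p * ∑ u, ∑ v, MS.aA w A u v) ^ 2)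
                then MS.mu p S else 0 := by split_ifs <;> simp [hmu]
            linarith
          · rw [if_pos (not_lt.1 h3)]
            have h1' : (0:ℝ) ≤ if t ≤ (MS.Y w S - p * ∑ u, ∑ v, w u v) ^ 2
                then MS.mu p S else 0 := by split_ifs <;> simp [hmu]
            have h2' : (0:ℝ) ≤ if t ≤ (MS.Y (MS.aE w P) S
                - p * ∑ u, ∑ v, MS.aE w P u v) ^ 2
                then MS.mu p S else 0 := by split_ifs <;> simp [hmu]
            linarith
    have hsum3 := Finset.sum_le_sum hpw
    rw [Finset.sum_add_distrib, Finset.sum_add_distrib] at hsum3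
    have hnum : 2 * p * (b * wVol w univ) / t + 2 * p * (b * wVol w univ) / t
        + 2 * p * (b * wVol w univ) / t ≤ ε := by
      have hcomb : 2 * p * (b * wVol w univ) / t + 2 * p * (b * wVol w univ) / t
          + 2 * p * (b * wVol w univ) / t = 6 * p * (b * wVol w univ) / t := by ring
      rw [hcomb, div_le_iff₀ ht]
      have hεδc : ε * δ^2 * (6 * b / (δ^2 * ε) + 1) = 6 * b + ε * δ^2 := by
        field_simp
      have h6b : 6 * b + ε * δ^2 ≤ ε * δ^2 * (wVol w univ * p) := by
        rw [← hεδc]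
        exact mul_le_mul_of_nonneg_left hc (by positivity)
      have h6b' : 6 * b ≤ ε * δ^2 * (wVol w univ * p) := by nlinarith [h6b, hε, hδ0]
      nlinarith [mul_le_mul_of_nonneg_right h6b' hpM.le, hpM]
    linarith [hsum3, hb1', hb2', hb3, hnum]
  -- conclude
  have hgood : 1 - ε ≤ ∑ S ∈ (univ : Finset (Sym2 V)).powerset,
      (if (MS.Y w S - p * ∑ u, ∑ v, w u v) ^ 2 < t
          ∧ (MS.Y (MS.aE w P) S - p * ∑ u, ∑ v, MS.aE w P u v) ^ 2 < t
          ∧ (∑ A ∈ P.parts, (MS.Y (MS.aA w A) S - p * ∑ u, ∑ v, MS.aA w A u v) ^ 2) < t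
        then MS.mu p S else 0) := by
    linarith [hsplit, hbad]
  have hfinal : ∑ S ∈ (univ : Finset (Sym2 V)).powerset,
      (if (MS.Y w S - p * ∑ u, ∑ v, w u v) ^ 2 < t
          ∧ (MS.Y (MS.aE w P) S - p * ∑ u, ∑ v, MS.aE w P u v) ^ 2 < t
          ∧ (∑ A ∈ P.parts, (MS.Y (MS.aA w A) S - p * ∑ u, ∑ v, MS.aA w A u v) ^ 2) < t
        then MS.mu p S else 0)
      ≤ wProb w p (fun w' => wModularity w - ε < wModularity w') := by
    have hrepr : wProb w p (fun w' => wModularity w - ε < wModularity w')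
        = ∑ S ∈ (univ : Finset (Sym2 V)).powerset,
          (if wModularity w - ε < wModularity (MS.wKeep w S) then MS.mu p S else 0) := by
      rw [wProb]
      refine Finset.sum_congr rfl fun S _ => ?_
      rw [MS.mu]
      congr 1
    rw [hrepr]
    refine Finset.sum_le_sum fun S _ => ?_
    by_cases hg : (MS.Y w S - p * ∑ u, ∑ v, w u v) ^ 2 < t
        ∧ (MS.Y (MS.aE w P) S - p * ∑ u, ∑ v, MS.aE w P u v) ^ 2 < t
        ∧ (∑ A ∈ P.parts, (MS.Y (MS.aA w A) S - p * ∑ u, ∑ v, MS.aA w A u v) ^ 2) < t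
    · rw [if_pos hg, if_pos (hGoodImp S hg)]
    · rw [if_neg hg]
      split_ifs
      · exact MS.mu_nonneg p hp0.le hp1 S
      · exact le_refl 0
  linarith [hgood, hfinal]
end

section
/- Let w be a weight function on V² that is not identically zero, and let 0 < η ≤ 1. Then for every partition 𝒜₀ of V there exists an η-fat partition 𝒜 of V, each of whose parts is a union of parts of 𝒜₀, such that q_𝒜(w) > q_{𝒜₀}(w) − 2η. In particular, there exists an η-fat partition 𝒜 of V with q_𝒜(w) > q*(w) − 2η. -/
open Finset
open scoped Classical

/-!
Write `h = η · vol(V)`. Coarsen `𝒜₀` recursively: if some union of parts of `𝒜₀` inside the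
current set `X` has volume in `[h, vol X - h]`, split `X` there and recurse on both sides;
otherwise keep `X` as a single part. In the latter case a subset-sum argument gives
`vol(X)² < Σ_{b ⊆ X} vol(b)² + 2h · vol(X)`, so the degree tax `Σ vol(A)² / vol(V)²` grows by
less than `2h / vol(V) = 2η`, while merging parts can only increase the edge term.
-/

section SubsetSums

variable {ι : Type*} [DecidableEq ι] {v : ι → ℝ} {X : Finset ι}

theorem sum_le_of_forall_le_of_gap {a t : ℝ} (ha : 0 ≤ a) (hvt : ∀ i ∈ X, v i ≤ t)
    (hgap : ∀ Y ⊆ X, ∑ i ∈ Y, v i ∉ Set.Ioc a (a + t)) : ∑ i ∈ X, v i ≤ a := by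
  induction X using Finset.induction_on with
  | empty => simpa using ha
  | insert x Y hx ih =>
    have hY : ∑ i ∈ Y, v i ≤ a := ih (fun i hi => hvt i (mem_insert_of_mem hi))
      fun Z hZ => hgap Z (hZ.trans (subset_insert x Y))
    rw [sum_insert hx]
    by_contra hgt
    exact hgap _ Subset.rfl ⟨by rw [sum_insert hx]; linarith,
      by rw [sum_insert hx]; linarith [hvt x (mem_insert_self x Y)]⟩

/-- Items larger than `t` pay for themselves; the others sum to at most `a`. -/
theorem mul_sub_le_sum_sq_of_gap {a t : ℝ} (ha : 0 ≤ a) (ht : 0 ≤ t)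
    (hgap : ∀ Y ⊆ X, ∑ i ∈ Y, v i ∉ Set.Ioc a (a + t)) :
    t * (∑ i ∈ X, v i - a) ≤ ∑ i ∈ X, v i ^ 2 := by
  have hsmall : ∑ i ∈ X with ¬ t < v i, v i ≤ a :=
    sum_le_of_forall_le_of_gap ha (fun i hi => not_lt.1 (mem_filter.1 hi).2)
      fun Y hY => hgap Y (hY.trans (filter_subset _ _))
  have hbig : t * ∑ i ∈ X with t < v i, v i ≤ ∑ i ∈ X with t < v i, v i ^ 2 := by
    rw [mul_sum]
    refine sum_le_sum fun i hi => ?_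
    have := (mem_filter.1 hi).2
    nlinarith
  have hsq : ∑ i ∈ X with ¬ t < v i, v i ^ 2 ≥ 0 := sum_nonneg fun i _ => sq_nonneg _
  rw [← sum_filter_add_sum_filter_not X (t < v ·) (fun i => v i ^ 2),
    ← sum_filter_add_sum_filter_not X (t < v ·)]
  nlinarith

theorem exists_subset_sum_ge_erase_lt {h : ℝ} (hh : 0 < h) (hX : h ≤ ∑ i ∈ X, v i) :
    ∃ P ⊆ X, ∃ x ∈ P, h ≤ ∑ i ∈ P, v i ∧ ∑ i ∈ P.erase x, v i < h ∧ ∀ i ∈ P, v x ≤ v i := by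
  obtain ⟨P, hP, hPmin⟩ := exists_min_image {P ∈ X.powerset | h ≤ ∑ i ∈ P, v i} card
    ⟨X, by simpa using hX⟩
  rw [mem_filter, mem_powerset] at hP
  have hPne : P.Nonempty := nonempty_iff_ne_empty.2 fun hP0 => by
    simp only [hP0, sum_empty] at hP; linarith
  obtain ⟨x, hxP, hxmin⟩ := exists_min_image P v hPne
  refine ⟨P, hP.1, x, hxP, hP.2, not_le.1 fun hle => ?_, hxmin⟩
  have := hPmin (P.erase x) (by simpa using ⟨(erase_subset x P).trans hP.1, hle⟩)
  have := card_erase_lt_of_mem hxP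
  omega

/-- Let `P` be a smallest set of items of total at least `h`, and `x` its lightest item. The gap
forces `P` past `S - h`, so `v x > S - 2h`; the items outside `P` sit in a gap shifted by
`∑ (P \ {x})`. -/
theorem mul_sub_lt_sum_sq_of_gap {h : ℝ} (hv : ∀ i ∈ X, 0 ≤ v i) (hh : 0 < h)
    (hS : 0 < ∑ i ∈ X, v i) (hgap : ∀ Y ⊆ X, ∑ i ∈ Y, v i ∉ Set.Icc h (∑ i ∈ X, v i - h)) :
    (∑ i ∈ X, v i) * (∑ i ∈ X, v i - 2 * h) < ∑ i ∈ X, v i ^ 2 := by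
  set S := ∑ i ∈ X, v i
  rcases le_or_gt S (2 * h) with hS2 | hS2
  · obtain ⟨i, hi, hvi⟩ :=
      exists_lt_of_sum_lt (f := fun _ => (0 : ℝ)) (g := v) (by simpa using hS)
    have := single_le_sum (f := (v · ^ 2)) (fun j _ => sq_nonneg (v j)) hi
    nlinarith
  obtain ⟨P, hPX, x, hxP, hPh, hph, hxmin⟩ := exists_subset_sum_ge_erase_lt hh (by linarith : h ≤ S)
  set p := ∑ i ∈ P.erase x, v i
  have hPsum : v x + p = ∑ i ∈ P, v i := add_sum_erase P v hxP
  have hPsq : v x ^ 2 + ∑ i ∈ P.erase x, v i ^ 2 = ∑ i ∈ P, v i ^ 2 :=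
    add_sum_erase P (v · ^ 2) hxP
  have hPbig : S - h < v x + p := by
    rw [hPsum]; by_contra! hle; exact hgap P hPX ⟨hPh, hle⟩
  have hp0 : 0 ≤ p := sum_nonneg fun i hi => hv i (hPX (mem_of_mem_erase hi))
  have hrest : (S - 2 * h) * (∑ i ∈ X \ P, v i - (h - p)) ≤ ∑ i ∈ X \ P, v i ^ 2 := by
    refine mul_sub_le_sum_sq_of_gap (by linarith) (by linarith) fun Y hY hYgap => ?_
    have hdisj : Disjoint (P.erase x) Y :=
      disjoint_of_subset_left (erase_subset x P) (subset_sdiff.1 hY).2.symm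
    refine hgap (P.erase x ∪ Y) (union_subset ((erase_subset x P).trans hPX)
      (hY.trans sdiff_subset)) ?_
    rw [sum_union hdisj]
    constructor <;> linarith [hYgap.1, hYgap.2]
  have hlight : v x * p ≤ ∑ i ∈ P.erase x, v i ^ 2 := by
    rw [mul_sum]
    refine sum_le_sum fun i hi => ?_
    have := hxmin i (mem_of_mem_erase hi)
    nlinarith [hv x (hPX hxP)]
  have hXsum : ∑ i ∈ X \ P, v i + ∑ i ∈ P, v i = S := sum_sdiff hPX
  have hXsq : ∑ i ∈ X \ P, v i ^ 2 + ∑ i ∈ P, v i ^ 2 = ∑ i ∈ X, v i ^ 2 := sum_sdiff hPX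
  nlinarith [mul_pos (by linarith : 0 < v x) (by linarith : 0 < v x + p - (S - h)),
    mul_nonneg (by linarith : 0 ≤ h - p) (by linarith : 0 ≤ v x)]

end SubsetSums

namespace Finpartition

variable {α : Type*} [DecidableEq α] {s t r X : Finset α}

@[simps]
def disjUnion (P : Finpartition s) (Q : Finpartition t) (hst : Disjoint s t) (hr : s ∪ t = r) :
    Finpartition r where
  parts := P.parts ∪ Q.parts
  supIndep := by
    rw [supIndep_iff_pairwiseDisjoint, coe_union]
    exact P.disjoint.union Q.disjoint fun a ha b hb _ => hst.mono (P.le ha) (Q.le hb)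
  sup_parts := by rw [sup_union, P.sup_parts, Q.sup_parts, sup_eq_union, hr]
  bot_notMem := by simp only [mem_union, P.bot_notMem, Q.bot_notMem, or_self, not_false_eq_true]

theorem sum_disjUnion_parts {M : Type*} [AddCommMonoid M] (P : Finpartition s)
    (Q : Finpartition t) (hst : Disjoint s t) (hr : s ∪ t = r) (f : Finset α → M) :
    ∑ p ∈ (P.disjUnion Q hst hr).parts, f p = ∑ p ∈ P.parts, f p + ∑ q ∈ Q.parts, f q := by
  refine sum_union (disjoint_left.2 fun p hP hQ => P.ne_bot hP ?_)
  exact disjoint_self.1 (hst.mono (P.le hP) (Q.le hQ))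

theorem disjoint_sup_sup_sdiff (P : Finpartition X) {T : Finset (Finset α)} (hT : T ⊆ P.parts) :
    Disjoint (T.sup id) ((P.parts \ T).sup id) :=
  Finset.disjoint_sup_left.2 fun _ hb => Finset.disjoint_sup_right.2 fun _ hc =>
    P.disjoint (hT hb) (sdiff_subset hc) fun hbc => (mem_sdiff.1 hc).2 (hbc ▸ hb)

theorem sup_union_sup_sdiff (P : Finpartition X) {T : Finset (Finset α)} (hT : T ⊆ P.parts) :
    T.sup id ∪ (P.parts \ T).sup id = X := by
  rw [← sup_eq_union, ← sup_union, union_sdiff_of_subset hT, P.sup_parts]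

theorem le_disjUnion_of_ofSubset_le (B : Finpartition X) {T : Finset (Finset α)}
    (hT : T ⊆ B.parts) {A₁ : Finpartition (T.sup id)} {A₂ : Finpartition ((B.parts \ T).sup id)}
    (h₁ : B.ofSubset hT rfl ≤ A₁) (h₂ : B.ofSubset sdiff_subset rfl ≤ A₂) :
    B ≤ A₁.disjUnion A₂ (B.disjoint_sup_sup_sdiff hT) (B.sup_union_sup_sdiff hT) := by
  intro p hp
  by_cases hpT : p ∈ T
  · obtain ⟨c, hc, hpc⟩ := h₁ (show p ∈ (B.ofSubset hT rfl).parts from hpT)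
    exact ⟨c, mem_union_left _ hc, hpc⟩
  · obtain ⟨c, hc, hpc⟩ := h₂
      (show p ∈ (B.ofSubset (sdiff_subset : B.parts \ T ⊆ B.parts) rfl).parts
        from mem_sdiff.2 ⟨hp, hpT⟩)
    exact ⟨c, mem_union_right _ hc, hpc⟩

theorem sum_parts_sum {M : Type*} [AddCommMonoid M] (P : Finpartition X) (f : α → M) :
    ∑ p ∈ P.parts, ∑ a ∈ p, f a = ∑ a ∈ X, f a := by
  conv_rhs => rw [← P.biUnion_parts, sum_biUnion P.disjoint]
  rfl

theorem sum_parts_sum_part {M : Type*} [AddCommMonoid M] (P : Finpartition X)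
    (f : Finset α → α → M) : ∑ p ∈ P.parts, ∑ a ∈ p, f p a = ∑ a ∈ X, f (P.part a) a := by
  rw [← P.sum_parts_sum]
  exact sum_congr rfl fun p hp => sum_congr rfl fun a ha => by rw [P.part_eq_of_mem hp ha]

theorem part_subset_part_of_le {B A : Finpartition X} (hBA : B ≤ A) {a : α} (ha : a ∈ X) :
    B.part a ⊆ A.part a := by
  obtain ⟨c, hc, hBc⟩ := hBA (B.part_mem.2 ha)
  rw [A.part_eq_of_mem hc (hBc (B.mem_part_self.2 ha))]
  exact hBc

theorem sum_parts_sum_sum_le_of_le {B A : Finpartition X} (hBA : B ≤ A) {w : α → α → ℝ}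
    (hw : ∀ a b, 0 ≤ w a b) :
    ∑ p ∈ B.parts, ∑ a ∈ p, ∑ b ∈ p, w a b ≤ ∑ p ∈ A.parts, ∑ a ∈ p, ∑ b ∈ p, w a b := by
  rw [B.sum_parts_sum_part (fun p a => ∑ b ∈ p, w a b),
    A.sum_parts_sum_part (fun p a => ∑ b ∈ p, w a b)]
  exact sum_le_sum fun a ha =>
    sum_le_sum_of_subset_of_nonneg (part_subset_part_of_le hBA ha) fun b _ _ => hw a b

variable {d : α → ℝ} {h : ℝ}

theorem sq_sum_lt_of_forall_sum_notMem_Icc (hd : ∀ a, 0 ≤ d a) (hh : 0 < h) (B : Finpartition X)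
    (hX : h ≤ ∑ a ∈ X, d a)
    (hgap : ∀ T ⊆ B.parts, ∑ p ∈ T, ∑ a ∈ p, d a ∉ Set.Icc h (∑ a ∈ X, d a - h)) :
    (∑ a ∈ X, d a) ^ 2 < ∑ p ∈ B.parts, (∑ a ∈ p, d a) ^ 2 + 2 * h * ∑ a ∈ X, d a := by
  have := mul_sub_lt_sum_sq_of_gap (fun p _ => sum_nonneg fun a _ => hd a) hh
    (by rw [B.sum_parts_sum]; linarith) (by rwa [B.sum_parts_sum])
  rw [B.sum_parts_sum] at this
  linarith

theorem exists_fat_coarsening (hd : ∀ a, 0 ≤ d a) (hh : 0 < h) (B : Finpartition X)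
    (hX : h ≤ ∑ a ∈ X, d a) :
    ∃ A : Finpartition X, B ≤ A ∧ (∀ s ∈ A.parts, h ≤ ∑ a ∈ s, d a) ∧
      ∑ s ∈ A.parts, (∑ a ∈ s, d a) ^ 2
        < ∑ p ∈ B.parts, (∑ a ∈ p, d a) ^ 2 + 2 * h * ∑ a ∈ X, d a := by
  induction X using Finset.strongInduction with
  | H X ih =>
  by_cases hsplit : ∃ T ⊆ B.parts, ∑ p ∈ T, ∑ a ∈ p, d a ∈ Set.Icc h (∑ a ∈ X, d a - h)
  · obtain ⟨T, hT, hTh, hTX⟩ := hsplit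
    have hvol (T' : Finset (Finset α)) (hT' : T' ⊆ B.parts) :
        ∑ p ∈ T', ∑ a ∈ p, d a = ∑ a ∈ T'.sup id, d a :=
      (B.ofSubset hT' rfl).sum_parts_sum d
    have hvolX : ∑ p ∈ B.parts \ T, ∑ a ∈ p, d a + ∑ p ∈ T, ∑ a ∈ p, d a = ∑ a ∈ X, d a := by
      rw [sum_sdiff hT, B.sum_parts_sum]
    have hsub (T' : Finset (Finset α)) (hT' : T' ⊆ B.parts)
        (hlt : ∑ p ∈ T', ∑ a ∈ p, d a < ∑ a ∈ X, d a) : T'.sup id ⊂ X :=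
      ssubset_of_subset_of_ne (B.sup_parts ▸ sup_mono hT') fun hT'X =>
        hlt.ne ((B.ofSubset hT' hT'X).sum_parts_sum d)
    obtain ⟨A₁, hBA₁, hfat₁, hsq₁⟩ := ih _ (hsub T hT (by linarith)) (B.ofSubset hT rfl)
      (by rw [← hvol T hT]; exact hTh)
    obtain ⟨A₂, hBA₂, hfat₂, hsq₂⟩ := ih _ (hsub _ sdiff_subset (by linarith))
      (B.ofSubset (sdiff_subset : B.parts \ T ⊆ B.parts) rfl)
      (by rw [← hvol _ sdiff_subset]; linarith)
    rw [ofSubset_parts, ← hvol T hT] at hsq₁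
    rw [ofSubset_parts, ← hvol _ sdiff_subset] at hsq₂
    refine ⟨A₁.disjUnion A₂ (B.disjoint_sup_sup_sdiff hT) (B.sup_union_sup_sdiff hT),
      B.le_disjUnion_of_ofSubset_le hT hBA₁ hBA₂, fun s hs => ?_, ?_⟩
    · rcases mem_union.1 hs with hs | hs
      exacts [hfat₁ s hs, hfat₂ s hs]
    · rw [sum_disjUnion_parts, ← sum_sdiff hT (f := fun p => (∑ a ∈ p, d a) ^ 2), ← hvolX]
      linarith
  · push Not at hsplit
    have hXne : X ≠ ∅ := by rintro rfl; simp at hX; linarith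
    refine ⟨indiscrete hXne, fun p hp => ⟨X, mem_singleton_self X, B.le hp⟩,
      by simpa using hX, ?_⟩
    simpa using sq_sum_lt_of_forall_sum_notMem_Icc hd hh B hX hsplit

end Finpartition

section Modularity

variable {V : Type} [Fintype V] {w : V → V → ℝ}

theorem wDeg_nonneg (hnn : ∀ u v, 0 ≤ w u v) (u : V) : 0 ≤ wDeg w u :=
  sum_nonneg fun v _ => hnn u v

theorem wVol_univ_pos (hnn : ∀ u v, 0 ≤ w u v) (hnz : ∃ u v, w u v ≠ 0) :
    0 < wVol w univ := by
  obtain ⟨u, v, huv⟩ := hnz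
  exact sum_pos' (fun x _ => wDeg_nonneg hnn x)
    ⟨u, mem_univ u, sum_pos' (fun y _ => hnn u y) ⟨v, mem_univ v, (hnn u v).lt_of_ne' huv⟩⟩

theorem sum_wEdge_le_of_le [DecidableEq V] (hnn : ∀ u v, 0 ≤ w u v)
    {A₀ A : Finpartition (univ : Finset V)} (hle : A₀ ≤ A) :
    ∑ b ∈ A₀.parts, wEdge w b ≤ ∑ s ∈ A.parts, wEdge w s := by
  simp only [wEdge, ← mul_sum]
  exact mul_le_mul_of_nonneg_left (Finpartition.sum_parts_sum_sum_le_of_le hle hnn) (by norm_num)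

theorem wModScore_sub_lt_of_le [DecidableEq V] (hnn : ∀ u v, 0 ≤ w u v)
    (hvol : 0 < wVol w univ) {η : ℝ} {A₀ A : Finpartition (univ : Finset V)} (hle : A₀ ≤ A)
    (hsq : ∑ s ∈ A.parts, wVol w s ^ 2
      < ∑ b ∈ A₀.parts, wVol w b ^ 2 + 2 * (η * wVol w univ) * wVol w univ) :
    wModScore w A₀ - 2 * η < wModScore w A := by
  have hedge := sum_wEdge_le_of_le hnn hle
  have hgain : wModScore w A - (wModScore w A₀ - 2 * η)
      = 2 * (∑ s ∈ A.parts, wEdge w s - ∑ b ∈ A₀.parts, wEdge w b) / wVol w univ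
        + (∑ b ∈ A₀.parts, wVol w b ^ 2 + 2 * (η * wVol w univ) * wVol w univ
          - ∑ s ∈ A.parts, wVol w s ^ 2) / wVol w univ ^ 2 := by
    simp only [wModScore, if_neg hvol.ne', ← mul_sum]
    field_simp
    ring
  have := div_nonneg (mul_nonneg zero_le_two (sub_nonneg.2 hedge)) hvol.le
  have := div_pos (sub_pos.2 hsq) (pow_pos hvol 2)
  linarith

end Modularity

theorem statement13_general (V : Type) [Fintype V] [DecidableEq V] (w : V → V → ℝ)
    (hnn : ∀ u v, 0 ≤ w u v) (hnz : ∃ u v, w u v ≠ 0) (η : ℝ) (hη0 : 0 < η) (hη1 : η ≤ 1) :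
    (∀ A₀ : Finpartition (univ : Finset V),
      ∃ A : Finpartition (univ : Finset V), A₀ ≤ A ∧
        (∀ s ∈ A.parts, η * wVol w univ ≤ wVol w s) ∧
        wModScore w A₀ - 2 * η < wModScore w A) ∧
    (∃ A : Finpartition (univ : Finset V),
      (∀ s ∈ A.parts, η * wVol w univ ≤ wVol w s) ∧
      wModularity w - 2 * η < wModScore w A) := by
  have hvol := wVol_univ_pos hnn hnz
  have hcoarsen : ∀ A₀ : Finpartition (univ : Finset V),
      ∃ A : Finpartition (univ : Finset V), A₀ ≤ A ∧
        (∀ s ∈ A.parts, η * wVol w univ ≤ wVol w s) ∧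
        wModScore w A₀ - 2 * η < wModScore w A := fun A₀ => by
    obtain ⟨A, hle, hfat, hsq⟩ := A₀.exists_fat_coarsening (wDeg_nonneg hnn)
      (mul_pos hη0 hvol) (mul_le_of_le_one_left hvol.le hη1)
    exact ⟨A, hle, hfat, wModScore_sub_lt_of_le hnn hvol hle hsq⟩
  refine ⟨hcoarsen, ?_⟩
  obtain ⟨P, hP⟩ := Finite.exists_max (wModScore w)
  obtain ⟨A, -, hfat, hlt⟩ := hcoarsen P
  exact ⟨A, hfat, (sub_le_sub_right (ciSup_le hP) _).trans_lt hlt⟩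

/-- The fattening lemma for weighted graphs: if the weight function w on V²
(symmetric, nonnegative, zero diagonal) is not identically zero and 0 < η ≤ 1,
then every partition 𝒜₀ of V can be coarsened (each part of the new partition a
union of parts of 𝒜₀) to an η-fat partition 𝒜 (each part A has
vol_w(A) ≥ η·vol_w(V)) with q_𝒜(w) > q_{𝒜₀}(w) − 2η. In particular some η-fat
partition 𝒜 has q_𝒜(w) > q*(w) − 2η. -/
theorem statement13 (V : Type) [Fintype V] [DecidableEq V] [Nonempty V] (w : V → V → ℝ)
    (hsym : ∀ u v, w u v = w v u) (hnn : ∀ u v, 0 ≤ w u v) (hdiag : ∀ v, w v v = 0)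
    (hnz : ∃ u v, w u v ≠ 0) (η : ℝ) (hη0 : 0 < η) (hη1 : η ≤ 1) :
    (∀ A₀ : Finpartition (univ : Finset V),
      ∃ A : Finpartition (univ : Finset V), A₀ ≤ A ∧
        (∀ s ∈ A.parts, η * wVol w univ ≤ wVol w s) ∧
        wModScore w A₀ - 2 * η < wModScore w A) ∧
    (∃ A : Finpartition (univ : Finset V),
      (∀ s ∈ A.parts, η * wVol w univ ≤ wVol w s) ∧
      wModularity w - 2 * η < wModScore w A) :=
  statement13_general V w hnn hnz η hη0 hη1
end

section
/- For every graph G, the sequence q*(G(b)) converges as b → ∞, and its limit equals q**(G) := sup_{b ∈ ℕ} q*(G(b)), where G(b) is the b-blow-up of G. Moreover q*(G(b)) ≥ q*(G) for every b ∈ ℕ. -/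
open Finset
open scoped Classical

/-- The b-blow-up G(b) of a graph G: each vertex is replaced by b copies, a copy of u
being adjacent to a copy of v iff uv is an edge of G (copies of the same vertex are
non-adjacent). -/
noncomputable def blowup {V : Type} (G : SimpleGraph V) (b : ℕ) :
    SimpleGraph (V × Fin b) :=
  SimpleGraph.comap Prod.fst G

/-!
A partition of `G(a)` pulls back along the map `G(b) → G(a)` that reduces copy indices mod `a`.
Its fibres have `⌊b/a⌋` or `⌊b/a⌋ + 1` elements, so the edges inside each part grow at least by
the factor `⌊b/a⌋²`, the volumes at most by `(⌊b/a⌋ + 1)²`, and the edge count lies between the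
two; hence the modularity score drops by `O(1/⌊b/a⌋)`. Thus `q*(G(b)) ≥ q*(G(a)) - O(a/b)`,
which forces the bounded sequence `q*(G(b))` to converge to its supremum. For the projection
`G(b) → G`, whose fibres all have `b` elements, the score does not change at all, which gives
`q*(G(b)) ≥ q*(G)`.
-/

open Filter Topology

lemma one_sub_two_div_le_sq_div_add_one {k : ℝ} (hk : 0 < k) :
    1 - 2 / k ≤ (k / (k + 1)) ^ 2 := by
  rw [div_pow, sub_le_iff_le_add, ← sub_le_iff_le_add', one_sub_div (by positivity),
    div_le_div_iff₀ (by positivity) hk]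
  nlinarith

lemma add_one_div_pow_four_le {k : ℝ} (hk : 1 ≤ k) : ((k + 1) / k) ^ 4 ≤ 1 + 15 / k := by
  have hk3 : 1 ≤ k ^ 3 := one_le_pow₀ hk
  rw [div_pow, div_le_iff₀ (by positivity)]
  field_simp
  nlinarith

lemma sub_sub_add_le_mul_sub_mul {X Y r s α β : ℝ} (hr : 1 - α ≤ r) (hs : s ≤ 1 + β)
    (hα : 0 ≤ α) (hβ : 0 ≤ β) (hX₀ : 0 ≤ X) (hX₁ : X ≤ 1) (hY₀ : 0 ≤ Y) (hY₁ : Y ≤ 1) :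
    X - Y - (α + β) ≤ r * X - s * Y := by
  nlinarith [mul_le_mul_of_nonneg_right hr hX₀, mul_le_mul_of_nonneg_right hs hY₀,
    mul_le_mul_of_nonneg_left hX₁ hα, mul_le_mul_of_nonneg_left hY₁ hβ]

lemma tendsto_atTop_ciSup_of_forall_eventually_ge {f : ℕ → ℝ} (hf : BddAbove (Set.range f))
    (h : ∀ a, ∀ ε > 0, ∀ᶠ b in atTop, f a - ε ≤ f b) :
    Tendsto f atTop (𝓝 (⨆ b, f b)) := by
  refine tendsto_order.2 ⟨fun x hx => ?_, fun x hx =>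
    Eventually.of_forall fun b => (le_ciSup hf b).trans_lt hx⟩
  obtain ⟨a, ha⟩ := exists_lt_of_lt_ciSup hx
  filter_upwards [h a ((f a - x) / 2) (by linarith)] with b hb
  linarith

lemma surjective_of_le_card_filter {W W' : Type} [DecidableEq W] [Fintype W'] {φ : W' → W}
    {k : ℕ} (hk : 0 < k) (hφ : ∀ x, k ≤ #{p | φ p = x}) : Function.Surjective φ := fun x =>
  let ⟨p, hp⟩ := card_pos.1 (hk.trans_le (hφ x))
  ⟨p, (mem_filter.1 hp).2⟩

section Fibres
variable {α β γ : Type} [Fintype α] [Fintype β] [DecidableEq α]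

lemma card_filter_fst_eq (v : α) : #{p : α × β | p.1 = v} = Fintype.card β := by
  rw [← one_mul (Fintype.card β), ← card_singleton v, ← card_univ, ← card_product]
  congr 1
  ext ⟨u, j⟩
  simp [eq_comm]

lemma card_filter_prodMap_id_eq [DecidableEq γ] (f : β → γ) (x : α × γ) :
    #{p : α × β | Prod.map id f p = x} = #{j | f j = x.2} := by
  rw [← one_mul #{j | f j = x.2}, ← card_singleton x.1, ← card_product]
  congr 1
  ext ⟨u, j⟩
  simp [Prod.ext_iff, and_comm, eq_comm]

end Fibres

lemma card_filter_fin_ofNat_eq (a b : ℕ) [NeZero a] (i : Fin a) :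
    #{j : Fin b | Fin.ofNat a j = i} = Nat.count (· ≡ i [MOD a]) b := by
  rw [Nat.count_eq_card_filter_range, ← Nat.Iio_eq_range, ← Fin.map_valEmbedding_univ,
    filter_map, card_map]
  congr 1
  ext j
  simp [Fin.ext_iff, Nat.ModEq, Nat.mod_eq_of_lt i.2]

lemma card_filter_fin_ofNat_mem_Icc (a b : ℕ) [NeZero a] (i : Fin a) :
    b / a ≤ #{j : Fin b | Fin.ofNat a j = i} ∧ #{j : Fin b | Fin.ofNat a j = i} ≤ b / a + 1 := by
  rw [card_filter_fin_ofNat_eq, Nat.count_modEq_card _ (Nat.pos_of_neZero a)]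
  split_ifs <;> omega

namespace Finpartition
variable {W W' : Type} [Fintype W] [DecidableEq W] [Fintype W'] [DecidableEq W']

def comap (φ : W' → W) (P : Finpartition (univ : Finset W)) : Finpartition (univ : Finset W') :=
  ofErase (P.parts.image fun A => ({p | φ p ∈ A} : Finset W'))
    (Set.PairwiseDisjoint.supIndep fun _ hs _ ht hst => by
      obtain ⟨A, hA, rfl⟩ := mem_image.1 hs
      obtain ⟨B, hB, rfl⟩ := mem_image.1 ht
      exact disjoint_filter.2 fun p _ hpA hpB =>
        disjoint_left.1 (P.disjoint hA hB fun h => hst (h ▸ rfl)) hpA hpB)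
    (eq_univ_of_forall fun p => by
      obtain ⟨A, hA, hpA⟩ := P.exists_mem (mem_univ (φ p))
      exact mem_sup.2 ⟨_, mem_image_of_mem _ hA, mem_filter.2 ⟨mem_univ p, hpA⟩⟩)

lemma sum_comap_parts {M : Type} [AddCommMonoid M] {φ : W' → W} (hφ : Function.Surjective φ)
    (P : Finpartition (univ : Finset W)) (g : Finset W' → M) :
    ∑ B ∈ (P.comap φ).parts, g B = ∑ A ∈ P.parts, g {p | φ p ∈ A} := by
  have hpre : ∀ A ∈ P.parts, ∃ p, φ p ∈ A := fun A hA => by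
    obtain ⟨x, hx⟩ := P.nonempty_of_mem_parts hA
    obtain ⟨p, rfl⟩ := hφ x
    exact ⟨p, hx⟩
  have hparts : (P.comap φ).parts = P.parts.image fun A => ({p | φ p ∈ A} : Finset W') := by
    refine erase_eq_of_notMem fun h => ?_
    obtain ⟨A, hA, hempty⟩ := mem_image.1 h
    obtain ⟨p, hp⟩ := hpre A hA
    simpa [hp] using congrArg (p ∈ ·) hempty
  rw [hparts, sum_image]
  intro A hA B hB hAB
  obtain ⟨p, hp⟩ := hpre A hA
  exact P.eq_of_mem_parts hA hB hp (by simpa [hp] using (Finset.ext_iff.1 hAB p).1)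

end Finpartition

namespace SimpleGraph

section Counting
variable {W : Type} [Fintype W] [DecidableEq W] (H : SimpleGraph W)

-- `intEdges` and `degSum` are built on the classical instance: switch to it first.
lemma two_mul_intEdges_eq_card_interedges [DecidableRel H.Adj] (A : Finset W) :
    2 * intEdges H A = #(H.interedges A A) := by
  obtain rfl := Subsingleton.elim ‹DecidableRel H.Adj› fun _ _ => Classical.propDecidable _
  rw [intEdges, card_eq_sum_card_fiberwise (f := fun p : W × W => s(p.1, p.2))
    (t := H.edgeFinset.filter fun e => ∀ v ∈ e, v ∈ A), sum_const_nat, mul_comm]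
  · intro e he
    induction e with
    | _ u v =>
      simp only [mem_filter, mem_edgeFinset, mem_edgeSet, Sym2.mem_iff, forall_eq_or_imp,
        forall_eq] at he
      have : {p ∈ H.interedges A A | s(p.1, p.2) = s(u, v)} = {(u, v), (v, u)} := by
        ext ⟨x, y⟩
        simp only [mem_filter, mem_interedges_iff, Sym2.eq_iff, mem_insert, mem_singleton,
          Prod.mk.injEq]
        constructor
        · rintro ⟨-, h⟩; exact h
        · rintro (⟨rfl, rfl⟩ | ⟨rfl, rfl⟩)
          · exact ⟨⟨he.2.1, he.2.2, he.1⟩, .inl ⟨rfl, rfl⟩⟩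
          · exact ⟨⟨he.2.2, he.2.1, he.1.symm⟩, .inr ⟨rfl, rfl⟩⟩
      rw [this, card_pair]
      simp [he.1.ne]
  · intro p hp
    rw [mem_coe, mem_interedges_iff] at hp
    simp only [coe_filter, Set.mem_ofPred_eq, mem_edgeFinset, mem_edgeSet, Sym2.mem_iff]
    exact ⟨hp.2.2, by rintro v (rfl | rfl) <;> simp [hp]⟩

lemma degSum_eq_card_interedges [DecidableRel H.Adj] (A : Finset W) :
    degSum H A = #(H.interedges A univ) := by
  obtain rfl := Subsingleton.elim ‹DecidableRel H.Adj› fun _ _ => Classical.propDecidable _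
  rw [degSum, interedges_def, card_filter, sum_product]
  refine sum_congr rfl fun v _ => ?_
  rw [← card_filter, ← neighborFinset_eq_filter, card_neighborFinset_eq_degree]

lemma edgeCount_eq_intEdges_univ : edgeCount H = intEdges H univ := by
  rw [edgeCount, intEdges, filter_true_of_mem fun _ _ v _ => mem_univ v]

lemma edgeCount_eq_zero_of_isEmpty [IsEmpty W] : edgeCount H = 0 := by
  simp [edgeCount, Subsingleton.elim H ⊥]

end Counting

section Comap
variable {W W' : Type} [DecidableEq W] [Fintype W'] (H : SimpleGraph W) (φ : W' → W) {k K : ℕ}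

lemma card_interedges_comap (A B : Finset W) :
    #((H.comap φ).interedges {p | φ p ∈ A} {p | φ p ∈ B})
      = ∑ e ∈ H.interedges A B, #{p | φ p = e.1} * #{p | φ p = e.2} := by
  rw [card_eq_sum_card_fiberwise (f := Prod.map φ φ) (t := H.interedges A B)]
  · refine sum_congr rfl fun ⟨x, y⟩ hxy => ?_
    rw [← card_product]
    congr 1
    ext ⟨p, q⟩
    simp only [mem_filter, mem_interedges_iff, mem_product, mem_univ, true_and, comap_adj,
      Prod.map, Prod.mk.injEq, and_iff_right_iff_imp]
    rintro ⟨rfl, rfl⟩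
    exact (H.mem_interedges_iff).1 hxy
  · intro p hp
    simp only [mem_coe, mem_interedges_iff, mem_filter, mem_univ, true_and, comap_adj] at hp ⊢
    exact hp

lemma sq_mul_card_interedges_le_comap (hk : ∀ x, k ≤ #{p | φ p = x}) (A B : Finset W) :
    k ^ 2 * #(H.interedges A B) ≤ #((H.comap φ).interedges {p | φ p ∈ A} {p | φ p ∈ B}) := by
  rw [card_interedges_comap, card_eq_sum_ones, mul_sum]
  exact sum_le_sum fun e _ => by rw [mul_one, sq]; exact Nat.mul_le_mul (hk _) (hk _)

lemma card_interedges_comap_le_sq_mul (hK : ∀ x, #{p | φ p = x} ≤ K) (A B : Finset W) :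
    #((H.comap φ).interedges {p | φ p ∈ A} {p | φ p ∈ B}) ≤ K ^ 2 * #(H.interedges A B) := by
  rw [card_interedges_comap, card_eq_sum_ones, mul_sum]
  exact sum_le_sum fun e _ => by rw [mul_one, sq]; exact Nat.mul_le_mul (hK _) (hK _)

variable [Fintype W] [DecidableEq W']

lemma sq_mul_intEdges_le_comap (hk : ∀ x, k ≤ #{p | φ p = x}) (A : Finset W) :
    k ^ 2 * intEdges H A ≤ intEdges (H.comap φ) {p | φ p ∈ A} := by
  have := H.sq_mul_card_interedges_le_comap φ hk A A
  rw [← two_mul_intEdges_eq_card_interedges, ← two_mul_intEdges_eq_card_interedges] at this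
  linarith

lemma intEdges_comap_le_sq_mul (hK : ∀ x, #{p | φ p = x} ≤ K) (A : Finset W) :
    intEdges (H.comap φ) {p | φ p ∈ A} ≤ K ^ 2 * intEdges H A := by
  have := H.card_interedges_comap_le_sq_mul φ hK A A
  rw [← two_mul_intEdges_eq_card_interedges, ← two_mul_intEdges_eq_card_interedges] at this
  linarith

lemma degSum_comap_le_sq_mul (hK : ∀ x, #{p | φ p = x} ≤ K) (A : Finset W) :
    degSum (H.comap φ) {p | φ p ∈ A} ≤ K ^ 2 * degSum H A := by
  have := H.card_interedges_comap_le_sq_mul φ hK A univ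
  rwa [← degSum_eq_card_interedges, filter_true_of_mem fun _ _ => mem_univ _,
    ← degSum_eq_card_interedges] at this

lemma sq_mul_edgeCount_le_comap (hk : ∀ x, k ≤ #{p | φ p = x}) :
    k ^ 2 * edgeCount H ≤ edgeCount (H.comap φ) := by
  simpa [edgeCount_eq_intEdges_univ] using H.sq_mul_intEdges_le_comap φ hk univ

lemma edgeCount_comap_le_sq_mul (hK : ∀ x, #{p | φ p = x} ≤ K) :
    edgeCount (H.comap φ) ≤ K ^ 2 * edgeCount H := by
  simpa [edgeCount_eq_intEdges_univ] using H.intEdges_comap_le_sq_mul φ hK univ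

end Comap

section Score
variable {W : Type} [Fintype W] [DecidableEq W] (H : SimpleGraph W)
  (P : Finpartition (univ : Finset W))

noncomputable def edgeContribution : ℝ := (∑ A ∈ P.parts, (intEdges H A : ℝ)) / edgeCount H

noncomputable def degreeTax : ℝ :=
  (∑ A ∈ P.parts, (degSum H A : ℝ) ^ 2) / (4 * (edgeCount H : ℝ) ^ 2)

lemma modScore_eq_sub : modScore H P = H.edgeContribution P - H.degreeTax P := by
  rw [modScore, edgeContribution, degreeTax]
  split_ifs with h <;> simp [h]

lemma sum_degSum_parts : ∑ A ∈ P.parts, degSum H A = 2 * edgeCount H := by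
  simp_rw [degSum_eq_card_interedges, edgeCount_eq_intEdges_univ,
    two_mul_intEdges_eq_card_interedges]
  exact (Rel.card_interedges_finpartition_left H.Adj P univ).symm

lemma sum_intEdges_parts_le : ∑ A ∈ P.parts, intEdges H A ≤ edgeCount H := by
  have : ∑ A ∈ P.parts, #(H.interedges A A) ≤ ∑ A ∈ P.parts, degSum H A :=
    sum_le_sum fun A _ => by
      rw [degSum_eq_card_interedges]
      exact card_le_card (interedges_mono H subset_rfl (subset_univ A))
  rw [sum_degSum_parts] at this
  simp_rw [← two_mul_intEdges_eq_card_interedges, ← mul_sum] at this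
  omega

lemma edgeContribution_nonneg : 0 ≤ H.edgeContribution P := by
  unfold edgeContribution; positivity

lemma edgeContribution_le_one : H.edgeContribution P ≤ 1 :=
  div_le_one_of_le₀ (mod_cast H.sum_intEdges_parts_le P) (Nat.cast_nonneg _)

lemma degreeTax_nonneg : 0 ≤ H.degreeTax P := by
  unfold degreeTax; positivity

lemma degreeTax_le_one : H.degreeTax P ≤ 1 := by
  refine div_le_one_of_le₀ ?_ (by positivity)
  calc ∑ A ∈ P.parts, (degSum H A : ℝ) ^ 2 ≤ (∑ A ∈ P.parts, (degSum H A : ℝ)) ^ 2 :=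
        sum_sq_le_sq_sum_of_nonneg fun _ _ => Nat.cast_nonneg _
    _ = 4 * (edgeCount H : ℝ) ^ 2 := by
        rw [← Nat.cast_sum, sum_degSum_parts]; push_cast; ring

lemma modScore_le_modularity : modScore H P ≤ modularity H :=
  le_ciSup (Set.finite_range _).bddAbove P

lemma exists_modScore_eq_modularity : ∃ P, modScore H P = modularity H := by
  obtain ⟨P, hP⟩ := Finite.exists_max (modScore H)
  exact ⟨P, le_antisymm (H.modScore_le_modularity P) (ciSup_le hP)⟩

lemma modularity_le_one : modularity H ≤ 1 :=
  ciSup_le fun P => by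
    rw [modScore_eq_sub]; linarith [H.edgeContribution_le_one P, H.degreeTax_nonneg P]

lemma modularity_eq_zero_of_isEmpty [IsEmpty W] : modularity H = 0 := by
  simp [modularity, modScore, H.edgeCount_eq_zero_of_isEmpty]

lemma modularity_nonneg : 0 ≤ modularity H := by
  by_cases hm : edgeCount H = 0
  · simpa [modScore, hm] using H.modScore_le_modularity ⊤
  have hW : (univ : Finset W) ≠ ⊥ := fun h => hm <| by
    have : IsEmpty W := univ_eq_empty_iff.1 h
    exact H.edgeCount_eq_zero_of_isEmpty
  refine le_of_eq_of_le ?_ (H.modScore_le_modularity (Finpartition.indiscrete hW))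
  have hvol := H.sum_degSum_parts (Finpartition.indiscrete hW)
  rw [Finpartition.indiscrete_parts, sum_singleton] at hvol
  rw [modScore, if_neg hm, Finpartition.indiscrete_parts, sum_singleton, sum_singleton, hvol,
    ← edgeCount_eq_intEdges_univ]
  field_simp
  push_cast
  ring

end Score

section ComapScore
variable {W W' : Type} [Fintype W] [DecidableEq W] [Fintype W'] [DecidableEq W']
  (H : SimpleGraph W) (P : Finpartition (univ : Finset W)) (φ : W' → W) {k K : ℕ}

lemma mul_edgeContribution_le_comap (hk : 0 < k) (hφk : ∀ x, k ≤ #{p | φ p = x})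
    (hφK : ∀ x, #{p | φ p = x} ≤ K) :
    ((k : ℝ) / K) ^ 2 * H.edgeContribution P ≤ (H.comap φ).edgeContribution (P.comap φ) := by
  rcases (Nat.zero_le (edgeCount H)).eq_or_lt with hm | hm
  · simpa [edgeContribution, ← hm] using (H.comap φ).edgeContribution_nonneg (P.comap φ)
  have hE : k ^ 2 * ∑ A ∈ P.parts, intEdges H A
      ≤ ∑ A ∈ P.parts, intEdges (H.comap φ) {p | φ p ∈ A} := by
    rw [mul_sum]; exact sum_le_sum fun A _ => H.sq_mul_intEdges_le_comap φ hφk A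
  have hm' : 0 < edgeCount (H.comap φ) :=
    (mul_pos (pow_pos hk 2) hm).trans_le (H.sq_mul_edgeCount_le_comap φ hφk)
  rw [edgeContribution, edgeContribution, Finpartition.sum_comap_parts
    (surjective_of_le_card_filter hk hφk), div_pow, div_mul_div_comm]
  calc ((k : ℝ) ^ 2 * ∑ A ∈ P.parts, (intEdges H A : ℝ)) / (K ^ 2 * edgeCount H)
      ≤ (∑ A ∈ P.parts, (intEdges (H.comap φ) {p | φ p ∈ A} : ℝ)) / (K ^ 2 * edgeCount H) := by
        gcongr; exact_mod_cast hE
    _ ≤ (∑ A ∈ P.parts, (intEdges (H.comap φ) {p | φ p ∈ A} : ℝ)) / edgeCount (H.comap φ) := by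
        gcongr; exact_mod_cast H.edgeCount_comap_le_sq_mul φ hφK

lemma degreeTax_comap_le_mul (hk : 0 < k) (hφk : ∀ x, k ≤ #{p | φ p = x})
    (hφK : ∀ x, #{p | φ p = x} ≤ K) :
    (H.comap φ).degreeTax (P.comap φ) ≤ ((K : ℝ) / k) ^ 4 * H.degreeTax P := by
  rcases (Nat.zero_le (edgeCount H)).eq_or_lt with hm | hm
  · have : edgeCount (H.comap φ) = 0 := by simpa [← hm] using H.edgeCount_comap_le_sq_mul φ hφK
    simpa [degreeTax, this] using mul_nonneg (by positivity) (H.degreeTax_nonneg P)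
  have hT : ∑ A ∈ P.parts, degSum (H.comap φ) {p | φ p ∈ A} ^ 2
      ≤ K ^ 4 * ∑ A ∈ P.parts, degSum H A ^ 2 := by
    rw [mul_sum]
    refine sum_le_sum fun A _ => ?_
    calc degSum (H.comap φ) {p | φ p ∈ A} ^ 2 ≤ (K ^ 2 * degSum H A) ^ 2 := by
          gcongr; exact H.degSum_comap_le_sq_mul φ hφK A
      _ = K ^ 4 * degSum H A ^ 2 := by ring
  have hm' : (k : ℝ) ^ 2 * edgeCount H ≤ edgeCount (H.comap φ) := by
    exact_mod_cast H.sq_mul_edgeCount_le_comap φ hφk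
  rw [degreeTax, degreeTax, Finpartition.sum_comap_parts
    (surjective_of_le_card_filter hk hφk), div_pow, div_mul_div_comm]
  calc (∑ A ∈ P.parts, (degSum (H.comap φ) {p | φ p ∈ A} : ℝ) ^ 2)
        / (4 * (edgeCount (H.comap φ) : ℝ) ^ 2)
      ≤ (K ^ 4 * ∑ A ∈ P.parts, (degSum H A : ℝ) ^ 2)
          / (4 * ((k : ℝ) ^ 2 * edgeCount H) ^ 2) := by
        gcongr
        exact_mod_cast hT
    _ = (K ^ 4 * ∑ A ∈ P.parts, (degSum H A : ℝ) ^ 2) / (k ^ 4 * (4 * (edgeCount H) ^ 2)) := by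
        ring

lemma modularity_le_modularity_comap (hk : 0 < k) (hφ : ∀ x, #{p | φ p = x} = k) :
    modularity H ≤ modularity (H.comap φ) := by
  obtain ⟨P, hP⟩ := H.exists_modScore_eq_modularity
  have hC := H.mul_edgeContribution_le_comap P φ hk (fun x => (hφ x).ge) (fun x => (hφ x).le)
  have hT := H.degreeTax_comap_le_mul P φ hk (fun x => (hφ x).ge) (fun x => (hφ x).le)
  rw [div_self (by positivity), one_pow, one_mul] at hC hT
  calc modularity H = H.edgeContribution P - H.degreeTax P := by rw [← hP, modScore_eq_sub]
    _ ≤ modScore (H.comap φ) (P.comap φ) := by rw [modScore_eq_sub]; linarith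
    _ ≤ modularity (H.comap φ) := modScore_le_modularity _ _

lemma modularity_sub_le_modularity_comap (hk : 0 < k)
    (hφ : ∀ x, k ≤ #{p | φ p = x} ∧ #{p | φ p = x} ≤ k + 1) :
    modularity H - 17 / k ≤ modularity (H.comap φ) := by
  obtain ⟨P, hP⟩ := H.exists_modScore_eq_modularity
  have hC := H.mul_edgeContribution_le_comap P φ hk (fun x => (hφ x).1) (fun x => (hφ x).2)
  have hT := H.degreeTax_comap_le_mul P φ hk (fun x => (hφ x).1) (fun x => (hφ x).2)
  have hk' : (1 : ℝ) ≤ k := by exact_mod_cast hk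
  push_cast at hC hT
  calc modularity H - 17 / k
      = H.edgeContribution P - H.degreeTax P - (2 / k + 15 / k) := by
        rw [← hP, modScore_eq_sub]; ring
    _ ≤ (k / (k + 1 : ℝ)) ^ 2 * H.edgeContribution P - ((k + 1 : ℝ) / k) ^ 4 * H.degreeTax P :=
        sub_sub_add_le_mul_sub_mul (one_sub_two_div_le_sq_div_add_one (by positivity))
          (add_one_div_pow_four_le hk') (by positivity) (by positivity)
          (H.edgeContribution_nonneg P) (H.edgeContribution_le_one P)
          (H.degreeTax_nonneg P) (H.degreeTax_le_one P)
    _ ≤ modScore (H.comap φ) (P.comap φ) := by rw [modScore_eq_sub]; linarith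
    _ ≤ modularity (H.comap φ) := modScore_le_modularity _ _

end ComapScore

section Blowup
variable {V : Type} [Fintype V] [DecidableEq V] (G : SimpleGraph V)

lemma modularity_le_modularity_blowup {b : ℕ} (hb : 0 < b) :
    modularity G ≤ modularity (blowup G b) :=
  G.modularity_le_modularity_comap Prod.fst hb fun v => by
    rw [card_filter_fst_eq, Fintype.card_fin]

-- `G(b)` is the comap of `G(a)` along the reduction of copy indices mod `a`.
lemma modularity_blowup_sub_le {a b : ℕ} (ha : 0 < a) (hab : a ≤ b) :
    modularity (blowup G a) - 17 / (b / a : ℕ) ≤ modularity (blowup G b) := by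
  have : NeZero a := ⟨ha.ne'⟩
  exact (blowup G a).modularity_sub_le_modularity_comap
    (Prod.map id fun j : Fin b => Fin.ofNat a j) (Nat.div_pos hab ha) fun x => by
      rw [card_filter_prodMap_id_eq]; exact card_filter_fin_ofNat_mem_Icc a b x.2

end Blowup

end SimpleGraph

/-- For every finite graph G, the sequence q*(G(b)) converges as b → ∞ to
q**(G) := sup_b q*(G(b)); moreover q*(G(b)) ≥ q*(G) for every b ≥ 1. -/
theorem statement15 (V : Type) [Fintype V] [DecidableEq V] (G : SimpleGraph V) :
    Filter.Tendsto (fun b : ℕ => modularity (blowup G b)) Filter.atTop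
      (nhds (⨆ b : ℕ, modularity (blowup G b))) ∧
    ∀ b : ℕ, 1 ≤ b → modularity G ≤ modularity (blowup G b) := by
  refine ⟨tendsto_atTop_ciSup_of_forall_eventually_ge ⟨1, ?_⟩ fun a ε hε => ?_,
    fun b hb => G.modularity_le_modularity_blowup hb⟩
  · rintro _ ⟨b, rfl⟩
    exact (blowup G b).modularity_le_one
  rcases a.eq_zero_or_pos with rfl | ha
  · refine Eventually.of_forall fun b => ?_
    linarith [(blowup G 0).modularity_eq_zero_of_isEmpty, (blowup G b).modularity_nonneg]
  have hlim : Tendsto (fun b : ℕ => 17 / ((b / a : ℕ) : ℝ)) atTop (𝓝 0) :=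
    tendsto_const_nhds.div_atTop
      (tendsto_natCast_atTop_atTop.comp (Nat.tendsto_div_const_atTop ha.ne'))
  filter_upwards [eventually_ge_atTop a, hlim.eventually (ge_mem_nhds hε)] with b hab hb
  linarith [G.modularity_blowup_sub_le ha hab]
end
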